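/- arXiv:1504.02273 — 7 statements merged into one kernel-verified Lean document; each statement's English description precedes it below -/
import Mathlib

section
/- For every η ∈ G₂ and for ν-almost every orbit C ∈ Q, the translate R_ημ_C is equivalent (mutually absolutely continuous) to μ_C — so the component measures μ_C of the disintegration are quasi-invariant under G₂ — and the Radon–Nikodym derivative d(R_ημ_C)/dμ_C coincides μ_C-almost everywhere with the restriction to the orbit C of the Radon–Nikodym derivative λ(·,η) = d(R_ημ)/dμ. -/
open MeasureTheory Set
open scoped ENNReal

/-!
Write `T x = act x η⁻¹` and `λ = d(μ.map T)/dμ`. Since `T` maps every orbit to itself, the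
families `c ↦ (μC c).map T` and `c ↦ (μC c).withDensity λ` are both concentrated on the orbits
and both integrate, against `ν`, to `μ.map T = μ.withDensity λ`. Testing on the sets
`s ∩ p ⁻¹' E` shows that two such families agree setwise for `ν`-almost every orbit, and since
the Borel σ-algebra of `X` is countably generated, countably many sets `s` suffice: so
`(μC c).map T = (μC c).withDensity λ` for `ν`-a.e. `c`. The components are σ-finite because `μ`
has a finite equivalent measure, and the claim is then the Radon–Nikodym theorem for
`(μC c).withDensity λ`, with `λ > 0` `μC c`-a.e.
-/

theorem countable_generatePiSystem {α : Type*} {S : Set (Set α)} (hS : S.Countable) :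
    (generatePiSystem S).Countable := by
  have hsub : generatePiSystem S ⊆ sInter '' {t | t.Finite ∧ t ⊆ S} := by
    intro s hs
    induction hs with
    | base h =>
      exact ⟨{_}, ⟨finite_singleton _, singleton_subset_iff.2 h⟩, sInter_singleton _⟩
    | inter _ _ _ ihs iht =>
      obtain ⟨F, ⟨hF, hFS⟩, rfl⟩ := ihs
      obtain ⟨H, ⟨hH, hHS⟩, rfl⟩ := iht
      exact ⟨F ∪ H, ⟨hF.union hH, union_subset hFS hHS⟩, sInter_union _ _⟩
  exact ((countable_ofPred_finite_subset hS).image _).mono hsub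

theorem sigmaFinite_of_ae_ne_zero_of_lintegral_ne_top {α : Type*} [MeasurableSpace α]
    {m : Measure α} {w : α → ℝ≥0∞} (hw : AEMeasurable w m) (hw0 : ∀ᵐ x ∂m, w x ≠ 0)
    (hwm : ∫⁻ x, w x ∂m ≠ ∞) : SigmaFinite m := by
  have := isFiniteMeasure_withDensity hwm
  rw [← withDensity_inv_same₀ hw hw0 ((ae_lt_top' hw hwm).mono fun _ => ne_of_lt)]
  exact SigmaFinite.withDensity_of_ne_top <|
    (withDensity_absolutelyContinuous m w).ae_le (hw0.mono fun _ => ENNReal.inv_ne_top.2)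

theorem iSup_indicator_spanningSets_min {α : Type*} [MeasurableSpace α] (μ : Measure α)
    [SigmaFinite μ] (f : α → ℝ≥0∞) (x : α) :
    ⨆ n : ℕ, (spanningSets μ n).indicator (fun y => min (f y) n) x = f x := by
  refine le_antisymm (iSup_le fun n => indicator_le (fun _ _ => min_le_left _ _) x) ?_
  obtain ⟨N, hN⟩ := mem_iUnion.1 (iUnion_spanningSets μ ▸ mem_univ x)
  calc f x = ⨆ n : ℕ, min (f x) n := by
        show f x = ⨆ n : ℕ, f x ⊓ n
        rw [← inf_iSup_eq, ENNReal.iSup_natCast, inf_top_eq]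
    _ ≤ ⨆ n : ℕ, (spanningSets μ n).indicator (fun y => min (f y) n) x := by
        refine iSup_le fun n => le_iSup_of_le (n + N) ?_
        rw [indicator_of_mem (monotone_spanningSets μ (Nat.le_add_left N n) hN)]
        gcongr
        exact_mod_cast Nat.le_add_right n N

theorem measure_inter_preimage_of_measure_compl_fiber {X Q : Type*} [MeasurableSpace X]
    {p : X → Q} {m : Measure X} {c : Q}
    (hm : m (p ⁻¹' {c})ᶜ = 0) (s : Set X) (E : Set Q) :
    m (s ∩ p ⁻¹' E) = E.indicator (fun _ => m s) c := by
  by_cases hc : c ∈ E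
  · rw [indicator_of_mem hc]
    refine measure_inter_conull (measure_mono_null (fun x hx => ?_) hm)
    exact fun hxc => hx (mem_preimage.2 (mem_singleton_iff.1 hxc ▸ hc))
  · rw [indicator_of_notMem hc]
    refine measure_mono_null (fun x hx => ?_) hm
    exact fun hxc => hc ((mem_singleton_iff.1 hxc) ▸ hx.2)

section

variable {X Q : Type*} [MeasurableSpace X] [MeasurableSpace Q] {ν : Measure Q} {p : X → Q}

theorem ae_eq_of_forall_ae_apply_eq [MeasurableSpace.CountablyGenerated X] (ρ : Measure X)
    [SigmaFinite ρ] {m₁ m₂ : Q → Measure X}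
    (h : ∀ s, MeasurableSet s → ρ s ≠ ∞ → ∀ᵐ c ∂ν, m₁ c s = m₂ c s ∧ m₁ c s ≠ ∞) :
    ∀ᵐ c ∂ν, m₁ c = m₂ c := by
  set S := generatePiSystem (MeasurableSpace.countableGeneratingSet X)
  set T := range (spanningSets ρ)
  have hSm : ∀ s ∈ S, MeasurableSet s :=
    generatePiSystem_measurableSet fun _ => MeasurableSpace.measurableSet_countableGeneratingSet
  have hT : ∀ t ∈ T, MeasurableSet t ∧ ρ t ≠ ∞ := by
    rintro _ ⟨n, rfl⟩
    exact ⟨measurableSet_spanningSets ρ n, (measure_spanningSets_lt_top ρ n).ne⟩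
  have htest : ∀ u ∈ image2 (· ∩ ·) S T ∪ T, MeasurableSet u ∧ ρ u ≠ ∞ := by
    rintro u (⟨s, hs, t, ht, rfl⟩ | hu)
    · exact ⟨(hSm s hs).inter (hT t ht).1,
        ne_top_of_le_ne_top (hT t ht).2 (measure_mono inter_subset_right)⟩
    · exact hT u hu
  have hcount : (image2 (· ∩ ·) S T ∪ T).Countable :=
    ((countable_generatePiSystem MeasurableSpace.countable_countableGeneratingSet).image2
      (countable_range _) _).union (countable_range _)
  filter_upwards [(ae_ball_iff hcount).2 fun u hu => h u (htest u hu).1 (htest u hu).2]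
    with c hc
  refine Measure.ext_of_generateFrom_of_cover (S := S) (T := T) ?_ (countable_range _)
    (isPiSystem_generatePiSystem _) (iUnion_spanningSets ρ) (fun t ht => (hc t (Or.inr ht)).2)
    (fun t ht s hs => (hc _ (Or.inl (mem_image2_of_mem hs ht))).1)
    (fun t ht => (hc t (Or.inr ht)).1)
  rw [generateFrom_generatePiSystem_eq, MeasurableSpace.generateFrom_countableGeneratingSet]

theorem setLIntegral_apply_of_measure_compl_fiber {m : Q → Measure X}
    (hm : ∀ c, m c (p ⁻¹' {c})ᶜ = 0) (s : Set X) {E : Set Q} (hE : MeasurableSet E) :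
    ∫⁻ c in E, m c s ∂ν = ∫⁻ c, m c (s ∩ p ⁻¹' E) ∂ν := by
  rw [← lintegral_indicator hE]
  refine lintegral_congr fun c => ?_
  rw [measure_inter_preimage_of_measure_compl_fiber (hm c)]
  by_cases hc : c ∈ E <;> simp [hc]

theorem ae_eq_of_lintegral_apply_eq [MeasurableSpace.CountablyGenerated X] [SigmaFinite ν]
    (hp : Measurable p) {m₁ m₂ : Q → Measure X}
    (h₁ : ∀ c, m₁ c (p ⁻¹' {c})ᶜ = 0) (h₂ : ∀ c, m₂ c (p ⁻¹' {c})ᶜ = 0)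
    (ρ : Measure X) [SigmaFinite ρ]
    (hρ₁ : ∀ A, MeasurableSet A → AEMeasurable (fun c => m₁ c A) ν ∧ ∫⁻ c, m₁ c A ∂ν = ρ A)
    (hρ₂ : ∀ A, MeasurableSet A → AEMeasurable (fun c => m₂ c A) ν ∧ ∫⁻ c, m₂ c A ∂ν = ρ A) :
    ∀ᵐ c ∂ν, m₁ c = m₂ c := by
  refine ae_eq_of_forall_ae_apply_eq ρ fun s hs hρs => ?_
  have hset : ∀ E, MeasurableSet E → ν E < ∞ →
      ∫⁻ c in E, m₁ c s ∂ν = ∫⁻ c in E, m₂ c s ∂ν := fun E hE _ => by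
    rw [setLIntegral_apply_of_measure_compl_fiber h₁ s hE,
      setLIntegral_apply_of_measure_compl_fiber h₂ s hE,
      (hρ₁ _ (hs.inter (hp hE))).2, (hρ₂ _ (hs.inter (hp hE))).2]
  filter_upwards [ae_eq_of_forall_setLIntegral_eq_of_sigmaFinite₀ (hρ₁ s hs).1 (hρ₂ s hs).1 hset,
    ae_lt_top' (hρ₁ s hs).1 ((hρ₁ s hs).2 ▸ hρs)] with c heq hlt
  exact ⟨heq, hlt.ne⟩

def IsDisintegration (μ : Measure X) (ν : Measure Q) (μC : Q → Measure X) : Prop :=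
  ∀ g : X → ℂ, Integrable g μ →
    (∀ᵐ c ∂ν, Integrable g (μC c)) ∧
    Integrable (fun c => ∫ x, g x ∂(μC c)) ν ∧
    ∫ c, (∫ x, g x ∂(μC c)) ∂ν = ∫ x, g x ∂μ

namespace IsDisintegration

variable {μ : Measure X} {μC : Q → Measure X}

theorem real (hd : IsDisintegration μ ν μC) {g : X → ℝ} (hg : Integrable g μ) :
    (∀ᵐ c ∂ν, Integrable g (μC c)) ∧
    Integrable (fun c => ∫ x, g x ∂(μC c)) ν ∧
    ∫ c, (∫ x, g x ∂(μC c)) ∂ν = ∫ x, g x ∂μ := by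
  have hcoe : ∀ m : Measure X, ∫ x, (g x : ℂ) ∂m = ((∫ x, g x ∂m : ℝ) : ℂ) :=
    fun _ => integral_ofReal
  obtain ⟨h₁, h₂, h₃⟩ := hd (fun x => (g x : ℂ)) hg.ofReal
  simp_rw [hcoe] at h₂ h₃
  refine ⟨h₁.mono fun c hc => by simpa using hc.re, by simpa using h₂.re, ?_⟩
  exact_mod_cast h₃

theorem lintegral_of_ne_top (hd : IsDisintegration μ ν μC) {f : X → ℝ≥0∞} (hf : Measurable f)
    (hf_ne_top : ∀ x, f x ≠ ∞) (hfμ : ∫⁻ x, f x ∂μ ≠ ∞) :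
    AEMeasurable (fun c => ∫⁻ x, f x ∂(μC c)) ν ∧ ∫⁻ c, ∫⁻ x, f x ∂(μC c) ∂ν = ∫⁻ x, f x ∂μ := by
  have hofReal : ∀ m : Measure X, Integrable (fun x => (f x).toReal) m →
      ∫⁻ x, f x ∂m = ENNReal.ofReal (∫ x, (f x).toReal ∂m) := fun m hm => by
    rw [ofReal_integral_eq_lintegral_ofReal hm (ae_of_all _ fun _ => ENNReal.toReal_nonneg)]
    simp_rw [ENNReal.ofReal_toReal (hf_ne_top _)]
  have hg := integrable_toReal_of_lintegral_ne_top hf.aemeasurable hfμ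
  obtain ⟨h₁, h₂, h₃⟩ := hd.real hg
  have hae : (fun c => ∫⁻ x, f x ∂(μC c)) =ᵐ[ν]
      fun c => ENNReal.ofReal (∫ x, (f x).toReal ∂(μC c)) := h₁.mono fun c hc => hofReal _ hc
  refine ⟨h₂.aemeasurable.ennreal_ofReal.congr hae.symm, ?_⟩
  rw [lintegral_congr_ae hae, ← ofReal_integral_eq_lintegral_ofReal h₂
    (ae_of_all _ fun _ => integral_nonneg fun _ => ENNReal.toReal_nonneg), h₃, hofReal μ hg]

theorem lintegral [SigmaFinite μ] (hd : IsDisintegration μ ν μC) {f : X → ℝ≥0∞}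
    (hf : Measurable f) :
    AEMeasurable (fun c => ∫⁻ x, f x ∂(μC c)) ν ∧ ∫⁻ c, ∫⁻ x, f x ∂(μC c) ∂ν = ∫⁻ x, f x ∂μ := by
  set F : ℕ → X → ℝ≥0∞ := fun n => (spanningSets μ n).indicator fun x => min (f x) n
  have hFm : ∀ n, Measurable (F n) := fun n =>
    (hf.min measurable_const).indicator (measurableSet_spanningSets μ n)
  have hFle : ∀ n x, F n x ≤ n := fun n => indicator_le fun _ _ => min_le_right _ _
  have hFint : ∀ n, ∫⁻ x, F n x ∂μ ≠ ∞ := fun n => by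
    refine ne_top_of_le_ne_top ?_ (lintegral_mono fun x =>
      indicator_le_indicator (g := fun _ => (n : ℝ≥0∞)) (min_le_right (f x) n))
    rw [lintegral_indicator_const (measurableSet_spanningSets μ n)]
    exact ENNReal.mul_ne_top (ENNReal.natCast_ne_top n) (measure_spanningSets_lt_top μ n).ne
  have hFmono : ∀ x, Monotone fun n => F n x := fun x m n hmn =>
    indicator_le_indicator_of_subset (monotone_spanningSets μ hmn) (fun _ => zero_le) x |>.trans
      (indicator_le_indicator (min_le_min_left _ (by exact_mod_cast hmn)))
  have hF := fun n => hd.lintegral_of_ne_top (hFm n)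
    (fun x => ne_top_of_le_ne_top (ENNReal.natCast_ne_top n) (hFle n x)) (hFint n)
  have hsup : ∀ m : Measure X, ∫⁻ x, f x ∂m = ⨆ n, ∫⁻ x, F n x ∂m := fun m => by
    simp_rw [← lintegral_iSup hFm fun _ _ h x => hFmono x h, F,
      iSup_indicator_spanningSets_min μ f]
  simp_rw [hsup]
  refine ⟨AEMeasurable.iSup fun n => (hF n).1, ?_⟩
  rw [lintegral_iSup' (fun n => (hF n).1) (ae_of_all _ fun c _ _ h =>
    lintegral_mono fun x => hFmono x h)]
  simp_rw [(hF _).2]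

theorem lintegral_apply [SigmaFinite μ] (hd : IsDisintegration μ ν μC) {A : Set X}
    (hA : MeasurableSet A) : AEMeasurable (fun c => μC c A) ν ∧ ∫⁻ c, μC c A ∂ν = μ A := by
  simpa [lintegral_indicator_one hA] using hd.lintegral (measurable_one.indicator hA)

theorem ae_ae_of_ae [SigmaFinite μ] (hd : IsDisintegration μ ν μC) {P : X → Prop}
    (h : ∀ᵐ x ∂μ, P x) : ∀ᵐ c ∂ν, ∀ᵐ x ∂(μC c), P x := by
  set N := toMeasurable μ {x | ¬P x}
  have hN : μ N = 0 := by rwa [measure_toMeasurable, ← ae_iff]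
  obtain ⟨hmeas, hint⟩ := hd.lintegral_apply (measurableSet_toMeasurable μ _)
  filter_upwards [(lintegral_eq_zero_iff' hmeas).1 (hint.trans hN)] with c hc
  exact ae_iff.2 (measure_mono_null (subset_toMeasurable μ _) hc)

theorem ae_sigmaFinite [SigmaFinite μ] (hd : IsDisintegration μ ν μC) (μ' : Measure X)
    [IsFiniteMeasure μ'] (hμ : μ ≪ μ') : ∀ᵐ c ∂ν, SigmaFinite (μC c) := by
  have hw := Measure.measurable_rnDeriv μ' μ
  have hwμ : ∫⁻ x, μ'.rnDeriv μ x ∂μ ≠ ∞ :=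
    ne_top_of_le_ne_top (measure_ne_top μ' univ) Measure.lintegral_rnDeriv_le
  obtain ⟨hmeas, hint⟩ := hd.lintegral hw
  filter_upwards [hd.ae_ae_of_ae (Measure.rnDeriv_pos' hμ), ae_lt_top' hmeas (hint ▸ hwμ)]
    with c hpos hlt
  exact sigmaFinite_of_ae_ne_zero_of_lintegral_ne_top hw.aemeasurable
    (hpos.mono fun _ => ne_of_gt) hlt.ne

variable {T : X → X}

theorem ae_map_eq_withDensity_rnDeriv [MeasurableSpace.CountablyGenerated X] [SigmaFinite μ]
    [SigmaFinite ν] (hd : IsDisintegration μ ν μC) (hp : Measurable p)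
    (hconc : ∀ c, μC c (p ⁻¹' {c})ᶜ = 0) (hT : MeasurableEmbedding T) (hpT : ∀ x, p (T x) = p x)
    (hac : μ.map T ≪ μ) :
    ∀ᵐ c ∂ν, (μC c).map T = (μC c).withDensity ((μ.map T).rnDeriv μ) := by
  have := hT.sigmaFinite_map (μ := μ)
  set lam := (μ.map T).rnDeriv μ
  have hlam : Measurable lam := Measure.measurable_rnDeriv _ _
  have hwd : μ.withDensity lam = μ.map T := Measure.withDensity_rnDeriv_eq _ _ hac
  refine ae_eq_of_lintegral_apply_eq hp (fun c => ?_)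
    (fun c => withDensity_absolutelyContinuous _ _ (hconc c)) (μ.map T) (fun A hA => ?_)
    (fun A hA => ?_)
  · rw [hT.map_apply, ← hconc c]
    congr 1
    ext x
    simp [hpT]
  · simp_rw [hT.map_apply]
    exact hd.lintegral_apply (hT.measurable hA)
  · simp_rw [withDensity_apply _ hA, ← lintegral_indicator hA]
    rw [← hwd, withDensity_apply _ hA, ← lintegral_indicator hA]
    exact hd.lintegral (hlam.indicator hA)

theorem ae_quasiInvariant [MeasurableSpace.CountablyGenerated X] [SigmaFinite μ] [SigmaFinite ν]
    (hd : IsDisintegration μ ν μC) (hp : Measurable p) (hconc : ∀ c, μC c (p ⁻¹' {c})ᶜ = 0)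
    (hT : MeasurableEmbedding T) (hpT : ∀ x, p (T x) = p x) (hac : μ.map T ≪ μ)
    (hac' : μ ≪ μ.map T) (hσ : ∀ᵐ c ∂ν, SigmaFinite (μC c)) :
    ∀ᵐ c ∂ν, ((μC c).map T ≪ μC c ∧ μC c ≪ (μC c).map T) ∧
      ∀ᵐ x ∂(μC c), ((μC c).map T).rnDeriv (μC c) x = (μ.map T).rnDeriv μ x := by
  have := hT.sigmaFinite_map (μ := μ)
  have hlam := Measure.measurable_rnDeriv (μ.map T) μ
  filter_upwards [hd.ae_map_eq_withDensity_rnDeriv hp hconc hT hpT hac, hσ,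
    hd.ae_ae_of_ae (Measure.rnDeriv_pos' hac')] with c hc _ hpos
  rw [hc]
  exact ⟨⟨withDensity_absolutelyContinuous _ _, withDensity_absolutelyContinuous'
    hlam.aemeasurable (hpos.mono fun _ => ne_of_gt)⟩, Measure.rnDeriv_withDensity _ hlam⟩

end IsDisintegration

end

theorem stmt0_general
    {G : Type*} [Group G] [TopologicalSpace G]
    (G₂ : Subgroup G)
    {X : Type*} [TopologicalSpace X]
    [SecondCountableTopology X]
    [MeasurableSpace X] [BorelSpace X]
    (act : X → G → X) (hactc : Continuous fun q : X × G => act q.1 q.2)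
    (hact1 : ∀ x : X, act x 1 = x)
    (hactm : ∀ (x : X) (g g' : G), act (act x g) g' = act x (g * g'))
    (μ : Measure X) [SigmaFinite μ]
    (hqi : ∀ g : G, μ.map (fun x => act x (g⁻¹)) ≪ μ ∧ μ ≪ μ.map (fun x => act x (g⁻¹)))
    {Q : Type*} [MeasurableSpace Q]
    (p : X → Q)
    (hporb : ∀ x y : X, p x = p y ↔ ∃ η ∈ G₂, act x η = y)
    (hQσ : ∀ E : Set Q, MeasurableSet E ↔ MeasurableSet (p ⁻¹' E))
    (μ' : Measure X) [IsFiniteMeasure μ'] (hμ'₂ : μ ≪ μ')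
    (ν : Measure Q) (hν : ν = μ'.map p)
    (μC : Q → Measure X)
    (hconc : ∀ c : Q, μC c ((p ⁻¹' {c})ᶜ) = 0)
    (hdis : ∀ g : X → ℂ, Integrable g μ →
      (∀ᵐ c ∂ν, Integrable g (μC c)) ∧
      Integrable (fun c => ∫ x, g x ∂(μC c)) ν ∧
      ∫ c, (∫ x, g x ∂(μC c)) ∂ν = ∫ x, g x ∂μ)
    :
    ∀ η : G, η ∈ G₂ →
      ∀ᵐ c ∂ν,
        ((μC c).map (fun x => act x (η⁻¹)) ≪ μC c ∧
          μC c ≪ (μC c).map (fun x => act x (η⁻¹))) ∧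
        ∀ᵐ x ∂(μC c),
          ((μC c).map (fun x => act x (η⁻¹))).rnDeriv (μC c) x
            = (μ.map (fun x => act x (η⁻¹))).rnDeriv μ x := by
  intro η hη
  have hd : IsDisintegration μ ν μC := hdis
  have hp : Measurable p := fun E hE => (hQσ E).1 hE
  have : IsFiniteMeasure ν := hν ▸ inferInstance
  have hcont : ∀ g : G, Continuous fun x => act x g := fun g =>
    hactc.comp (continuous_id.prodMk continuous_const)
  let Tη : X ≃ₜ X :=
    { toFun := fun x => act x η⁻¹
      invFun := fun x => act x η
      left_inv := fun x => by simp [hactm, hact1]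
      right_inv := fun x => by simp [hactm, hact1]
      continuous_toFun := hcont η⁻¹
      continuous_invFun := hcont η }
  have hpT : ∀ x, p (act x η⁻¹) = p x := fun x =>
    (hporb _ _).2 ⟨η, hη, by rw [hactm, inv_mul_cancel, hact1]⟩
  exact hd.ae_quasiInvariant hp hconc Tη.measurableEmbedding hpT (hqi η).1 (hqi η).2
    (hd.ae_sigmaFinite μ' hμ'₂)

theorem stmt0
    {G : Type*} [Group G] [TopologicalSpace G] [IsTopologicalGroup G]
    [LocallyCompactSpace G] [SecondCountableTopology G] [T2Space G]
    (G₁ G₂ : Subgroup G) (hG₁ : IsClosed (G₁ : Set G)) (hG₂ : IsClosed (G₂ : Set G))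
    {X : Type*} [TopologicalSpace X] [TopologicalSpace.MetrizableSpace X]
    [LocallyCompactSpace X] [SecondCountableTopology X]
    [MeasurableSpace X] [BorelSpace X]
    (π : G → X) (hπc : Continuous π) (hπo : IsOpenMap π) (hπs : Function.Surjective π)
    (act : X → G → X) (hactc : Continuous fun q : X × G => act q.1 q.2)
    (hact1 : ∀ x : X, act x 1 = x)
    (hactm : ∀ (x : X) (g g' : G), act (act x g) g' = act x (g * g'))
    (hπact : ∀ g g' : G, π (g * g') = act (π g) g')
    (hπker : ∀ g g' : G, π g = π g' ↔ ∃ h ∈ G₁, g' = h * g)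
    (μ : Measure X) [SigmaFinite μ] [μ.Regular] (hμ : μ ≠ 0)
    (hqi : ∀ g : G, μ.map (fun x => act x (g⁻¹)) ≪ μ ∧ μ ≪ μ.map (fun x => act x (g⁻¹)))
    {Q : Type*} [MeasurableSpace Q]
    (p : X → Q) (hps : Function.Surjective p)
    (hporb : ∀ x y : X, p x = p y ↔ ∃ η ∈ G₂, act x η = y)
    (hQσ : ∀ E : Set Q, MeasurableSet E ↔ MeasurableSet (p ⁻¹' E))
    (μ' : Measure X) [IsFiniteMeasure μ'] (hμ'₁ : μ' ≪ μ) (hμ'₂ : μ ≪ μ')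
    (ν : Measure Q) (hν : ν = μ'.map p)
    (μC : Q → Measure X)
    (hconc : ∀ c : Q, μC c ((p ⁻¹' {c})ᶜ) = 0)
    (hdis : ∀ g : X → ℂ, Integrable g μ →
      (∀ᵐ c ∂ν, Integrable g (μC c)) ∧
      Integrable (fun c => ∫ x, g x ∂(μC c)) ν ∧
      ∫ c, (∫ x, g x ∂(μC c)) ∂ν = ∫ x, g x ∂μ)
    :
    ∀ η : G, η ∈ G₂ →
      ∀ᵐ c ∂ν,
        ((μC c).map (fun x => act x (η⁻¹)) ≪ μC c ∧
          μC c ≪ (μC c).map (fun x => act x (η⁻¹))) ∧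
        ∀ᵐ x ∂(μC c),
          ((μC c).map (fun x => act x (η⁻¹))).rnDeriv (μC c) x
            = (μ.map (fun x => act x (η⁻¹))).rnDeriv μ x :=
  stmt0_general G₂ act hactc hact1 hactm μ hqi p hporb hQσ μ' hμ'₂ ν hν μC hconc hdis
end

section
/- There exist a Borel set B ⊆ X and a μ-negligible subset N₀ ⊆ X which is a union of G₂-orbits, such that B intersects every G₂-orbit not contained in N₀ in exactly one point. -/
open MeasureTheory Set
open scoped ENNReal Pointwise

/-!
Off a null set the sets `B i` may be replaced by Borel sets `C i`, and then two points outside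
`B 0` lie in the same orbit iff they have the same signature `x ↦ (x ∈ C i)ᵢ : ℕ → Bool`.
By Lusin's theorem, applied to the countably many `C i`, almost all of `X` is covered by countably
many compact sets on which the signature is continuous. On a compact set `K` carrying a continuous
map `g`, a Borel set meeting every fibre of `g` on `K` exactly once is formed by the
lexicographically least points of the fibres with respect to a countable separating family of
open sets. These sets are glued over the compact pieces, each value of the signature being served
by the first piece attaining it, and `N₀` is the union of the orbits missing every piece.
-/

section FiberRefinement

variable {X Y : Type*} {g : X → Y} {K : Set X} {u : ℕ → Set X}

open Classical in
/-- Lexicographic shrinking of the fibre `K ∩ g ⁻¹' {t}`: at step `n` the set `u n` is cut away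
unless this would leave nothing. If the `u n` separate points, `⋂ n` is a single point. -/
noncomputable def fiberRefinement (g : X → Y) (K : Set X) (u : ℕ → Set X) : ℕ → Y → Set X
  | 0, t => K ∩ g ⁻¹' {t}
  | n + 1, t =>
    if (fiberRefinement g K u n t \ u n).Nonempty then fiberRefinement g K u n t \ u n
    else fiberRefinement g K u n t

theorem mem_fiberRefinement_succ {n : ℕ} {t : Y} {x : X} :
    x ∈ fiberRefinement g K u (n + 1) t ↔
      x ∈ fiberRefinement g K u n t ∧ (x ∈ u n → fiberRefinement g K u n t ⊆ u n) := by
  rw [fiberRefinement]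
  split_ifs with h
  · have : ¬ fiberRefinement g K u n t ⊆ u n := fun hsub => h.ne_empty (sdiff_eq_empty.2 hsub)
    simp only [mem_sdiff]
    tauto
  · have : fiberRefinement g K u n t ⊆ u n := sdiff_eq_empty.1 (not_nonempty_iff_eq_empty.1 h)
    tauto

theorem fiberRefinement_subset (n : ℕ) (t : Y) : fiberRefinement g K u n t ⊆ K ∩ g ⁻¹' {t} := by
  induction n with
  | zero => exact subset_rfl
  | succ n ih => exact fun x hx => ih (mem_fiberRefinement_succ.1 hx).1

theorem fiberRefinement_succ_subset (n : ℕ) (t : Y) :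
    fiberRefinement g K u (n + 1) t ⊆ fiberRefinement g K u n t :=
  fun _ hx => (mem_fiberRefinement_succ.1 hx).1

theorem fiberRefinement_nonempty {t : Y} (h : (K ∩ g ⁻¹' {t}).Nonempty) (n : ℕ) :
    (fiberRefinement g K u n t).Nonempty := by
  induction n with
  | zero => exact h
  | succ n ih =>
    rw [fiberRefinement]
    split_ifs with h'
    exacts [h', ih]

theorem isClosed_fiberRefinement [TopologicalSpace X] [TopologicalSpace Y] [T1Space Y]
    (hK : IsClosed K) (hg : ContinuousOn g K) (hu : ∀ n, IsOpen (u n)) (n : ℕ) (t : Y) :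
    IsClosed (fiberRefinement g K u n t) := by
  induction n with
  | zero => exact hg.preimage_isClosed_of_isClosed hK isClosed_singleton
  | succ n ih =>
    rw [fiberRefinement]
    split_ifs
    exacts [ih.sdiff (hu n), ih]

theorem setOf_fiberRefinement_succ_diff_nonempty (n : ℕ) (W : Set X) :
    {t | (fiberRefinement g K u (n + 1) t \ W).Nonempty} =
      {t | (fiberRefinement g K u n t \ (u n ∪ W)).Nonempty} ∪
        ({t | (fiberRefinement g K u n t \ W).Nonempty} \
          {t | (fiberRefinement g K u n t \ u n).Nonempty}) := by
  ext t
  simp only [mem_ofPred_eq, mem_union, mem_sdiff]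
  rw [fiberRefinement]
  split_ifs with h
  · simp [sdiff_sdiff, h]
  · have : fiberRefinement g K u n t \ (u n ∪ W) = ∅ :=
      subset_eq_empty (sdiff_subset_sdiff_right subset_union_left) (not_nonempty_iff_eq_empty.1 h)
    simp [this, h]

theorem measurableSet_setOf_fiberRefinement_diff_nonempty [TopologicalSpace X]
    [TopologicalSpace Y] [T2Space Y] [MeasurableSpace Y] [OpensMeasurableSpace Y]
    (hK : IsCompact K) (hg : ContinuousOn g K) (hu : ∀ n, IsOpen (u n))
    (n : ℕ) {W : Set X} (hW : IsOpen W) :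
    MeasurableSet {t | (fiberRefinement g K u n t \ W).Nonempty} := by
  induction n generalizing W with
  | zero =>
    have : {t | (fiberRefinement g K u 0 t \ W).Nonempty} = g '' (K \ W) := by
      ext t
      simp [fiberRefinement, Set.Nonempty, and_right_comm]
    rw [this]
    exact ((hK.diff hW).image_of_continuousOn (hg.mono sdiff_subset)).isClosed.measurableSet
  | succ n ih =>
    rw [setOf_fiberRefinement_succ_diff_nonempty]
    exact (ih ((hu n).union hW)).union ((ih hW).diff (ih (hu n)))

theorem measurableSet_setOf_mem_fiberRefinement [TopologicalSpace X] [T2Space X]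
    [MeasurableSpace X] [OpensMeasurableSpace X] [TopologicalSpace Y] [T2Space Y]
    [MeasurableSpace Y] [OpensMeasurableSpace Y] (hK : IsCompact K) (hg : ContinuousOn g K)
    (hgm : Measurable g) (hu : ∀ n, IsOpen (u n)) (n : ℕ) :
    MeasurableSet {x | x ∈ fiberRefinement g K u n (g x)} := by
  induction n with
  | zero =>
    have : {x | x ∈ fiberRefinement g K u 0 (g x)} = K := by
      ext x
      simp [fiberRefinement]
    rw [this]
    exact hK.isClosed.measurableSet
  | succ n ih =>
    have : {x | x ∈ fiberRefinement g K u (n + 1) (g x)} =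
        {x | x ∈ fiberRefinement g K u n (g x)} ∩
          ((u n)ᶜ ∪ g ⁻¹' {t | (fiberRefinement g K u n t \ u n).Nonempty}ᶜ) := by
      ext x
      simp only [mem_fiberRefinement_succ, mem_ofPred_eq, mem_inter_iff, mem_union, mem_compl_iff,
        mem_preimage, not_nonempty_iff_eq_empty, sdiff_eq_empty]
      tauto
    rw [this]
    exact ih.inter ((hu n).measurableSet.compl.union
      (hgm (measurableSet_setOf_fiberRefinement_diff_nonempty hK hg hu n (hu n)).compl))

theorem eq_of_forall_mem_fiberRefinement (hu : ∀ x y, (∀ n, x ∈ u n ↔ y ∈ u n) → x = y)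
    {t : Y} {x y : X} (hx : ∀ n, x ∈ fiberRefinement g K u n t)
    (hy : ∀ n, y ∈ fiberRefinement g K u n t) : x = y :=
  hu x y fun n => ⟨fun hxu => (mem_fiberRefinement_succ.1 (hx (n + 1))).2 hxu (hy n),
    fun hyu => (mem_fiberRefinement_succ.1 (hy (n + 1))).2 hyu (hx n)⟩

end FiberRefinement

theorem IsCompact.exists_measurableSet_existsUnique_eq_of_continuousOn {X Y : Type*}
    [TopologicalSpace X] [T2Space X] [SecondCountableTopology X] [MeasurableSpace X]
    [OpensMeasurableSpace X] [TopologicalSpace Y] [T2Space Y] [MeasurableSpace Y]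
    [OpensMeasurableSpace Y] {g : X → Y} {K : Set X} (hK : IsCompact K) (hg : ContinuousOn g K)
    (hgm : Measurable g) :
    ∃ S ⊆ K, MeasurableSet S ∧ ∀ x ∈ K, ∃! y, y ∈ S ∧ g y = g x := by
  obtain ⟨u, hu, hsep⟩ := exists_seq_separating X isOpen_empty univ
  set F := fiberRefinement g K u
  have hsep' : ∀ x y, (∀ n, x ∈ u n ↔ y ∈ u n) → x = y := fun x y => hsep x trivial y trivial
  refine ⟨{x | ∀ n, x ∈ F n (g x)}, fun x hx => (fiberRefinement_subset 0 _ (hx 0)).1,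
    by simpa only [ofPred_forall] using
      MeasurableSet.iInter fun n => measurableSet_setOf_mem_fiberRefinement hK hg hgm hu n,
    fun x hx => ?_⟩
  obtain ⟨y, hy⟩ : (⋂ n, F n (g x)).Nonempty :=
    IsCompact.nonempty_iInter_of_sequence_nonempty_isCompact_isClosed _
      (fiberRefinement_succ_subset · _) (fiberRefinement_nonempty ⟨x, hx, rfl⟩)
      (hK.of_isClosed_subset (isClosed_fiberRefinement hK.isClosed hg hu 0 _)
        (fiberRefinement_subset 0 _ |>.trans inter_subset_left))
      (isClosed_fiberRefinement hK.isClosed hg hu · _)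
  rw [mem_iInter] at hy
  have hgy : g y = g x := (fiberRefinement_subset 0 _ (hy 0)).2
  refine ⟨y, ⟨fun n => hgy ▸ hy n, hgy⟩, fun z ⟨hz, hgz⟩ => ?_⟩
  exact eq_of_forall_mem_fiberRefinement hsep' (fun n => hgz ▸ hz n) hy

section Measure

variable {X : Type*} [TopologicalSpace X] [T2Space X] [MeasurableSpace X] [OpensMeasurableSpace X]

theorem exists_measurableSet_existsUnique_eq_of_iUnion_isCompact [SecondCountableTopology X]
    {Y : Type*} [TopologicalSpace Y] [T2Space Y] [MeasurableSpace Y]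
    [OpensMeasurableSpace Y] {g : X → Y} (hgm : Measurable g) {K : ℕ → Set X}
    (hK : ∀ n, IsCompact (K n)) (hg : ∀ n, ContinuousOn g (K n)) :
    ∃ S ⊆ ⋃ n, K n, MeasurableSet S ∧ ∀ x ∈ ⋃ n, K n, ∃! y, y ∈ S ∧ g y = g x := by
  choose S hSK hSm hS using fun n => (hK n).exists_measurableSet_existsUnique_eq_of_continuousOn
    (hg n) hgm
  set E := disjointed fun n => g '' K n
  have hE : ∀ n, MeasurableSet (E n) := MeasurableSet.disjointed fun n =>
    ((hK n).image_of_continuousOn (hg n)).isClosed.measurableSet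
  refine ⟨⋃ n, S n ∩ g ⁻¹' E n, iUnion_mono fun n => inter_subset_left.trans (hSK n),
    .iUnion fun n => (hSm n).inter (hgm (hE n)), fun x hx => ?_⟩
  obtain ⟨n, hxn⟩ : ∃ n, g x ∈ E n := by
    rw [← mem_iUnion, iUnion_disjointed, mem_iUnion]
    exact (mem_iUnion.1 hx).imp fun n hxn => mem_image_of_mem g hxn
  obtain ⟨w, hw, hgw⟩ := disjointed_subset _ n hxn
  obtain ⟨y, ⟨hyS, hgy⟩, hy⟩ := hS n w hw
  refine ⟨y, ⟨mem_iUnion.2 ⟨n, hyS, by simpa [hgy, hgw]⟩, hgy.trans hgw⟩, ?_⟩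
  rintro z ⟨hz, hgz⟩
  obtain ⟨m, hzS, hzE⟩ := mem_iUnion.1 hz
  obtain rfl : m = n := by
    by_contra hmn
    exact disjoint_left.1 (disjoint_disjointed _ hmn) hzE (hgz.symm ▸ hxn)
  exact hy z ⟨hzS, hgz.trans hgw.symm⟩

variable {μ : Measure X} [μ.InnerRegularCompactLTTop]

theorem MeasurableSet.exists_isCompact_sdiff_lt_continuousOn_boolIndicator {P C : Set X}
    (hP : MeasurableSet P) (hPμ : μ P ≠ ∞) (hC : MeasurableSet C) {ε : ℝ≥0∞} (hε : ε ≠ 0) :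
    ∃ K ⊆ P, IsCompact K ∧ μ (P \ K) < ε ∧ ContinuousOn C.boolIndicator K := by
  have hε2 : ε / 2 ≠ 0 := ENNReal.half_pos hε |>.ne'
  obtain ⟨K₁, hK₁P, hK₁, hK₁μ⟩ := (hP.inter hC).exists_isCompact_sdiff_lt
    (measure_ne_top_of_subset inter_subset_left hPμ) hε2
  obtain ⟨K₀, hK₀P, hK₀, hK₀μ⟩ := (hP.diff hC).exists_isCompact_sdiff_lt
    (measure_ne_top_of_subset sdiff_subset hPμ) hε2
  refine ⟨K₁ ∪ K₀, union_subset (hK₁P.trans inter_subset_left) (hK₀P.trans sdiff_subset),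
    hK₁.union hK₀, ?_, ?_⟩
  · calc μ (P \ (K₁ ∪ K₀)) ≤ μ ((P ∩ C) \ K₁ ∪ (P \ C) \ K₀) := measure_mono fun x hx => by
          by_cases hxC : x ∈ C
          · exact .inl ⟨⟨hx.1, hxC⟩, fun h => hx.2 (.inl h)⟩
          · exact .inr ⟨⟨hx.1, hxC⟩, fun h => hx.2 (.inr h)⟩
      _ ≤ μ ((P ∩ C) \ K₁) + μ ((P \ C) \ K₀) := measure_union_le _ _
      _ < ε / 2 + ε / 2 := ENNReal.add_lt_add hK₁μ hK₀μ
      _ = ε := ENNReal.add_halves ε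
  · refine ContinuousOn.union_of_isClosed ((continuousOn_const (c := true)).congr fun x hx => ?_)
      ((continuousOn_const (c := false)).congr fun x hx => ?_) hK₁.isClosed hK₀.isClosed
    · exact (mem_iff_boolIndicator C x).1 (hK₁P hx).2
    · exact (notMem_iff_boolIndicator C x).1 (hK₀P hx).2

theorem MeasurableSet.exists_isCompact_sdiff_lt_forall_continuousOn_boolIndicator {P : Set X}
    (hP : MeasurableSet P) (hPμ : μ P ≠ ∞) {C : ℕ → Set X} (hC : ∀ i, MeasurableSet (C i))
    {ε : ℝ≥0∞} (hε : ε ≠ 0) :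
    ∃ K ⊆ P, IsCompact K ∧ μ (P \ K) < ε ∧ ∀ i, ContinuousOn (C i).boolIndicator K := by
  obtain ⟨δ, hδ, hδε⟩ := ENNReal.exists_pos_sum_of_countable' hε ℕ
  choose K hKP hK hKμ hKC using fun i =>
    hP.exists_isCompact_sdiff_lt_continuousOn_boolIndicator hPμ (hC i) (hδ i).ne'
  refine ⟨⋂ i, K i, (iInter_subset _ 0).trans (hKP 0),
    (hK 0).of_isClosed_subset (isClosed_iInter fun i => (hK i).isClosed) (iInter_subset _ 0),
    ?_, fun i => (hKC i).mono (iInter_subset _ i)⟩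
  calc μ (P \ ⋂ i, K i) = μ (⋃ i, P \ K i) := by rw [sdiff_iInter]
    _ ≤ ∑' i, μ (P \ K i) := measure_iUnion_le _
    _ ≤ ∑' i, δ i := ENNReal.tsum_le_tsum fun i => (hKμ i).le
    _ < ε := hδε

theorem MeasurableSet.exists_isCompact_ae_cover_forall_continuousOn_boolIndicator [SigmaFinite μ]
    {A : Set X} (hA : MeasurableSet A) {C : ℕ → Set X} (hC : ∀ i, MeasurableSet (C i)) :
    ∃ K : ℕ → Set X, (∀ n, K n ⊆ A) ∧ (∀ n, IsCompact (K n)) ∧ μ (A \ ⋃ n, K n) = 0 ∧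
      ∀ n i, ContinuousOn (C i).boolIndicator (K n) := by
  choose K hKA hK hKμ hKC using fun k j : ℕ =>
    MeasurableSet.exists_isCompact_sdiff_lt_forall_continuousOn_boolIndicator
      (hA.inter (measurableSet_spanningSets μ k))
      (measure_ne_top_of_subset inter_subset_right (measure_spanningSets_lt_top μ k).ne) hC
      (ENNReal.inv_ne_zero.2 (ENNReal.natCast_ne_top j))
  refine ⟨fun n => K n.unpair.1 n.unpair.2, fun n => (hKA _ _).trans inter_subset_left,
    fun n => hK _ _, ?_, fun n => hKC _ _⟩
  rw [Set.iUnion_unpair K]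
  refine measure_mono_null (t := ⋃ k, (A ∩ spanningSets μ k) \ ⋃ j, K k j)
    (fun x ⟨hxA, hxK⟩ => ?_) (measure_iUnion_null fun k => ?_)
  · obtain ⟨k, hk⟩ := mem_iUnion.1 (iUnion_spanningSets μ ▸ mem_univ x)
    exact mem_iUnion.2 ⟨k, ⟨hxA, hk⟩, fun h => hxK (mem_iUnion.2 ⟨k, h⟩)⟩
  · by_contra h
    obtain ⟨j, hj⟩ := ENNReal.exists_inv_nat_lt h
    exact ((hj.trans_le (measure_mono (sdiff_subset_sdiff_right (subset_iUnion _ j)))).trans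
      (hKμ k j)).false

end Measure

theorem rel_iff_forall_mem_iff {X : Type*} {r : X → X → Prop} (hr : Equivalence r)
    {B : ℕ → Set X} (hBinv : ∀ i x y, r x y → x ∈ B i → y ∈ B i)
    (hBsep : ∀ x, ¬ {y | r x y} ⊆ B 0 → {y | r x y} = ⋂ i ∈ {i | 1 ≤ i ∧ {y | r x y} ⊆ B i}, B i)
    {x y : X} (hx : x ∉ B 0) : r x y ↔ ∀ i, (x ∈ B i ↔ y ∈ B i) := by
  refine ⟨fun hxy i => ⟨hBinv i x y hxy, hBinv i y x (hr.symm hxy)⟩, fun hB => ?_⟩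
  have hxy : y ∈ ⋂ i ∈ {i | 1 ≤ i ∧ {y | r x y} ⊆ B i}, B i :=
    mem_iInter₂.2 fun i hi => (hB i).1 (hi.2 (hr.refl x))
  rwa [← hBsep x fun h => hx (h (hr.refl x))] at hxy

section Transversal

variable {X : Type*} [TopologicalSpace X] [T2Space X] [SecondCountableTopology X]
  [MeasurableSpace X] [OpensMeasurableSpace X] {μ : Measure X} [SigmaFinite μ]
  [μ.InnerRegularCompactLTTop] {r : X → X → Prop}

theorem exists_measurableSet_transversal_of_forall_mem_iff (hr : Equivalence r) {A : Set X}
    (hA : MeasurableSet A) (hA₀ : μ Aᶜ = 0) {C : ℕ → Set X} (hC : ∀ i, MeasurableSet (C i))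
    (hrC : ∀ x ∈ A, ∀ y ∈ A, r x y ↔ ∀ i, (x ∈ C i ↔ y ∈ C i)) :
    ∃ S N : Set X, MeasurableSet S ∧ μ N = 0 ∧ (∀ x y, r x y → x ∈ N → y ∈ N) ∧
      ∀ x, ¬ {y | r x y} ⊆ N → ∃! y, y ∈ S ∩ {y | r x y} := by
  set g : X → ℕ → Bool := fun x i => (C i).boolIndicator x
  have hgm : Measurable g := measurable_pi_lambda _ fun i =>
    measurable_to_bool (by simpa [g, preimage_boolIndicator_true] using hC i)
  have hrg : ∀ x ∈ A, ∀ y ∈ A, r x y ↔ g x = g y := fun x hx y hy => by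
    rw [hrC x hx y hy, funext_iff]
    refine forall_congr' fun i => ?_
    rw [mem_iff_boolIndicator, mem_iff_boolIndicator, ← Bool.eq_iff_iff]
  obtain ⟨K, hKA, hK, hKμ, hKC⟩ := hA.exists_isCompact_ae_cover_forall_continuousOn_boolIndicator
    (μ := μ) hC
  obtain ⟨S, hSK, hSm, hS⟩ := exists_measurableSet_existsUnique_eq_of_iUnion_isCompact
    hgm hK fun n => continuousOn_pi.2 (hKC n)
  have hUA : (⋃ n, K n) ⊆ A := iUnion_subset hKA
  refine ⟨S, {x | ∀ y, r x y → y ∉ ⋃ n, K n}, hSm, ?_, ?_, ?_⟩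
  · refine measure_mono_null (fun x hx => ?_) (measure_union_null hA₀ hKμ)
    by_cases hxA : x ∈ A
    exacts [.inr ⟨hxA, hx x (hr.refl x)⟩, .inl hxA]
  · exact fun x y hxy hx z hyz => hx z (hr.trans hxy hyz)
  · intro x hx
    obtain ⟨w, hxw, hwU⟩ : ∃ w, r x w ∧ w ∈ ⋃ n, K n := by
      simp only [subset_def, mem_ofPred_eq, not_forall, not_not] at hx
      obtain ⟨z, hxz, w, hzw, hwU⟩ := hx
      exact ⟨w, hr.trans hxz hzw, hwU⟩
    obtain ⟨y, ⟨hyS, hgy⟩, hy⟩ := hS w hwU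
    refine ⟨y, ⟨hyS, hr.trans hxw ((hrg w (hUA hwU) y (hUA (hSK hyS))).2 hgy.symm)⟩, ?_⟩
    rintro z ⟨hzS, hxz⟩
    exact hy z ⟨hzS, ((hrg w (hUA hwU) z (hUA (hSK hzS))).1 (hr.trans (hr.symm hxw) hxz)).symm⟩

theorem exists_measurableSet_transversal (hr : Equivalence r) (B : ℕ → Set X)
    (hBnm : ∀ i, NullMeasurableSet (B i) μ) (hBinv : ∀ i x y, r x y → x ∈ B i → y ∈ B i)
    (hB₀ : μ (B 0) = 0)
    (hBsep : ∀ x, ¬ {y | r x y} ⊆ B 0 → {y | r x y} = ⋂ i ∈ {i | 1 ≤ i ∧ {y | r x y} ⊆ B i}, B i) :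
    ∃ S N : Set X, MeasurableSet S ∧ μ N = 0 ∧ (∀ x y, r x y → x ∈ N → y ∈ N) ∧
      ∀ x, ¬ {y | r x y} ⊆ N → ∃! y, y ∈ S ∩ {y | r x y} := by
  have hgood : ∀ᵐ x ∂μ, x ∉ B 0 ∧ ∀ i, (x ∈ toMeasurable μ (B i) ↔ x ∈ B i) :=
    (measure_eq_zero_iff_ae_notMem.1 hB₀).and
      (ae_all_iff.2 fun i => (hBnm i).toMeasurable_ae_eq.mem_iff)
  obtain ⟨A, hAae, hA, hAgood⟩ := hgood.exists_measurable_mem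
  refine exists_measurableSet_transversal_of_forall_mem_iff hr hA hAae
    (fun i => measurableSet_toMeasurable μ (B i)) fun x hx y hy => ?_
  simp only [(hAgood x hx).2, (hAgood y hy).2]
  exact rel_iff_forall_mem_iff hr hBinv hBsep (hAgood x hx).1

end Transversal

theorem stmt2_general
    {G : Type*} [Group G]
    (G₂ : Subgroup G)
    {X : Type*} [TopologicalSpace X] [TopologicalSpace.MetrizableSpace X]
    [SecondCountableTopology X]
    [MeasurableSpace X] [BorelSpace X]
    (act : X → G → X)
    (hact1 : ∀ x : X, act x 1 = x)
    (hactm : ∀ (x : X) (g g' : G), act (act x g) g' = act x (g * g'))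
    (μ : Measure X) [SigmaFinite μ] [μ.Regular]
    (B : ℕ → Set X) (hBnm : ∀ i : ℕ, NullMeasurableSet (B i) μ)
    (hBinv : ∀ i : ℕ, ∀ x ∈ B i, ∀ η ∈ G₂, act x η ∈ B i)
    (hB0 : μ (B 0) = 0)
    (hBsep : ∀ x : X, ¬ ({y : X | ∃ η ∈ G₂, act x η = y} ⊆ B 0) →
      {y : X | ∃ η ∈ G₂, act x η = y} =
        ⋂ i ∈ {i : ℕ | 1 ≤ i ∧ {y : X | ∃ η ∈ G₂, act x η = y} ⊆ B i}, B i)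
    :
    ∃ Bsec N₀ : Set X,
      MeasurableSet Bsec ∧ μ N₀ = 0 ∧
      (∀ x ∈ N₀, ∀ η ∈ G₂, act x η ∈ N₀) ∧
      ∀ x : X, ¬ ({y : X | ∃ η ∈ G₂, act x η = y} ⊆ N₀) →
        ∃! y : X, y ∈ Bsec ∩ {y : X | ∃ η ∈ G₂, act x η = y} := by
  have horbit : Equivalence fun x y : X => ∃ η ∈ G₂, act x η = y :=
    { refl := fun x => ⟨1, G₂.one_mem, hact1 x⟩
      symm := fun ⟨η, hη, hxy⟩ => ⟨η⁻¹, G₂.inv_mem hη, by rw [← hxy, hactm, mul_inv_cancel, hact1]⟩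
      trans := fun ⟨η, hη, hxy⟩ ⟨θ, hθ, hyz⟩ =>
        ⟨η * θ, G₂.mul_mem hη hθ, by rw [← hactm, hxy, hyz]⟩ }
  obtain ⟨S, N, hS, hN, hNinv, hSN⟩ := exists_measurableSet_transversal horbit B hBnm
    (fun i x _ ⟨η, hη, hxy⟩ hx => hxy ▸ hBinv i x hx η hη) hB0 hBsep
  exact ⟨S, N, hS, hN, fun x hx η hη => hNinv x _ ⟨η, hη, rfl⟩ hx, hSN⟩

theorem stmt2
    {G : Type*} [Group G] [TopologicalSpace G] [IsTopologicalGroup G]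
    [LocallyCompactSpace G] [SecondCountableTopology G] [T2Space G]
    (G₁ G₂ : Subgroup G) (hG₁ : IsClosed (G₁ : Set G)) (hG₂ : IsClosed (G₂ : Set G))
    {X : Type*} [TopologicalSpace X] [TopologicalSpace.MetrizableSpace X]
    [LocallyCompactSpace X] [SecondCountableTopology X]
    [MeasurableSpace X] [BorelSpace X]
    (π : G → X) (hπc : Continuous π) (hπo : IsOpenMap π) (hπs : Function.Surjective π)
    (act : X → G → X) (hactc : Continuous fun q : X × G => act q.1 q.2)
    (hact1 : ∀ x : X, act x 1 = x)
    (hactm : ∀ (x : X) (g g' : G), act (act x g) g' = act x (g * g'))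
    (hπact : ∀ g g' : G, π (g * g') = act (π g) g')
    (hπker : ∀ g g' : G, π g = π g' ↔ ∃ h ∈ G₁, g' = h * g)
    (μ : Measure X) [SigmaFinite μ] [μ.Regular] (hμ : μ ≠ 0)
    (hqi : ∀ g : G, μ.map (fun x => act x (g⁻¹)) ≪ μ ∧ μ ≪ μ.map (fun x => act x (g⁻¹)))
    (B : ℕ → Set X) (hBnm : ∀ i : ℕ, NullMeasurableSet (B i) μ)
    (hBinv : ∀ i : ℕ, ∀ x ∈ B i, ∀ η ∈ G₂, act x η ∈ B i)
    (hB0 : μ (B 0) = 0)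
    (hBsep : ∀ x : X, ¬ ({y : X | ∃ η ∈ G₂, act x η = y} ⊆ B 0) →
      {y : X | ∃ η ∈ G₂, act x η = y} =
        ⋂ i ∈ {i : ℕ | 1 ≤ i ∧ {y : X | ∃ η ∈ G₂, act x η = y} ⊆ B i}, B i)
    :
    ∃ Bsec N₀ : Set X,
      MeasurableSet Bsec ∧ μ N₀ = 0 ∧
      (∀ x ∈ N₀, ∀ η ∈ G₂, act x η ∈ N₀) ∧
      ∀ x : X, ¬ ({y : X | ∃ η ∈ G₂, act x η = y} ⊆ N₀) →
        ∃! y : X, y ∈ Bsec ∩ {y : X | ∃ η ∈ G₂, act x η = y} :=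
  stmt2_general G₂ act hact1 hactm μ B hBnm hBinv hB0 hBsep
end

section
/- For every compact subset K of X, the image π_X(K) of K under the orbit map is a measurable subset of Q. -/
open MeasureTheory Set
open scoped ENNReal Pointwise

/-
The saturation `p⁻¹(p K)` of `K` is the image of `K × G₂` under the action map. Since `G` is
σ-compact, so is the closed subgroup `G₂`, hence so is `K × G₂` and its continuous image; a
σ-compact subset of a Hausdorff space is Borel, and the quotient σ-algebra on `Q` is defined
through preimages under `p`.
-/

lemma IsSigmaCompact.measurableSet {X : Type*} [TopologicalSpace X] [T2Space X]
    [MeasurableSpace X] [OpensMeasurableSpace X] {s : Set X} (hs : IsSigmaCompact s) :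
    MeasurableSet s := by
  obtain ⟨K, hK, rfl⟩ := hs
  exact MeasurableSet.iUnion fun n => (hK n).measurableSet

lemma IsCompact.prod_isSigmaCompact {X Y : Type*} [TopologicalSpace X] [TopologicalSpace Y]
    {K : Set X} {s : Set Y} (hK : IsCompact K) (hs : IsSigmaCompact s) :
    IsSigmaCompact (K ×ˢ s) := by
  obtain ⟨T, hT, rfl⟩ := hs
  rw [prod_iUnion]
  exact isSigmaCompact_iUnion_of_isCompact _ fun n => hK.prod (hT n)

lemma IsClosed.isSigmaCompact {X : Type*} [TopologicalSpace X] [SigmaCompactSpace X]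
    {s : Set X} (hs : IsClosed s) : IsSigmaCompact s :=
  isSigmaCompact_univ.of_isClosed_subset hs (subset_univ s)

lemma preimage_image_eq_image_uncurry_prod {X G Q : Type*} {act : X → G → X} {S : Set G}
    {p : X → Q} (hp : ∀ x y, p x = p y ↔ ∃ g ∈ S, act x g = y) (K : Set X) :
    p ⁻¹' (p '' K) = Function.uncurry act '' (K ×ˢ S) := by
  ext y
  simp only [mem_preimage, mem_image, mem_prod, Prod.exists, Function.uncurry_apply_pair, hp]
  constructor
  · rintro ⟨x, hx, g, hg, rfl⟩
    exact ⟨x, g, ⟨hx, hg⟩, rfl⟩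
  · rintro ⟨x, g, ⟨hx, hg⟩, rfl⟩
    exact ⟨x, hx, g, hg, rfl⟩

theorem stmt4_general
    {G : Type*} [Group G] [TopologicalSpace G]
    [LocallyCompactSpace G] [SecondCountableTopology G]
    (G₂ : Subgroup G) (hG₂ : IsClosed (G₂ : Set G))
    {X : Type*} [TopologicalSpace X] [TopologicalSpace.MetrizableSpace X]
    [MeasurableSpace X] [BorelSpace X]
    (act : X → G → X) (hactc : Continuous fun q : X × G => act q.1 q.2)
    {Q : Type*} [MeasurableSpace Q]
    (p : X → Q)
    (hporb : ∀ x y : X, p x = p y ↔ ∃ η ∈ G₂, act x η = y)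
    (hQσ : ∀ E : Set Q, MeasurableSet E ↔ MeasurableSet (p ⁻¹' E))
    :
    ∀ K : Set X, IsCompact K → MeasurableSet (p '' K) := by
  intro K hK
  rw [hQσ, preimage_image_eq_image_uncurry_prod hporb]
  exact ((hK.prod_isSigmaCompact hG₂.isSigmaCompact).image hactc).measurableSet

theorem stmt4
    {G : Type*} [Group G] [TopologicalSpace G] [IsTopologicalGroup G]
    [LocallyCompactSpace G] [SecondCountableTopology G] [T2Space G]
    (G₁ G₂ : Subgroup G) (hG₁ : IsClosed (G₁ : Set G)) (hG₂ : IsClosed (G₂ : Set G))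
    {X : Type*} [TopologicalSpace X] [TopologicalSpace.MetrizableSpace X]
    [LocallyCompactSpace X] [SecondCountableTopology X]
    [MeasurableSpace X] [BorelSpace X]
    (π : G → X) (hπc : Continuous π) (hπo : IsOpenMap π) (hπs : Function.Surjective π)
    (act : X → G → X) (hactc : Continuous fun q : X × G => act q.1 q.2)
    (hact1 : ∀ x : X, act x 1 = x)
    (hactm : ∀ (x : X) (g g' : G), act (act x g) g' = act x (g * g'))
    (hπact : ∀ g g' : G, π (g * g') = act (π g) g')
    (hπker : ∀ g g' : G, π g = π g' ↔ ∃ h ∈ G₁, g' = h * g)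
    (μ : Measure X) [SigmaFinite μ] [μ.Regular] (hμ : μ ≠ 0)
    (hqi : ∀ g : G, μ.map (fun x => act x (g⁻¹)) ≪ μ ∧ μ ≪ μ.map (fun x => act x (g⁻¹)))
    {Q : Type*} [MeasurableSpace Q]
    (p : X → Q) (hps : Function.Surjective p)
    (hporb : ∀ x y : X, p x = p y ↔ ∃ η ∈ G₂, act x η = y)
    (hQσ : ∀ E : Set Q, MeasurableSet E ↔ MeasurableSet (p ⁻¹' E))
    (μ' : Measure X) [IsFiniteMeasure μ'] (hμ'₁ : μ' ≪ μ) (hμ'₂ : μ ≪ μ')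
    (ν : Measure Q) (hν : ν = μ'.map p)
    (B : ℕ → Set X) (hBnm : ∀ i : ℕ, NullMeasurableSet (B i) μ)
    (hBinv : ∀ i : ℕ, ∀ x ∈ B i, ∀ η ∈ G₂, act x η ∈ B i)
    (hB0 : μ (B 0) = 0)
    (hBsep : ∀ x : X, ¬ ({y : X | ∃ η ∈ G₂, act x η = y} ⊆ B 0) →
      {y : X | ∃ η ∈ G₂, act x η = y} =
        ⋂ i ∈ {i : ℕ | 1 ≤ i ∧ {y : X | ∃ η ∈ G₂, act x η = y} ⊆ B i}, B i)
    :
    ∀ K : Set X, IsCompact K → MeasurableSet (p '' K) :=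
  stmt4_general G₂ hG₂ act hactc p hporb hQσ
end

section
/- For every continuous compactly supported function f : G → H_L, with support K, there is a unique function f⁰ : G → H_L such that ∫_{G₁} ⟨J_L L_{h⁻¹} f(hx), v⟩ dμ_{G₁}(h) = ⟨J_L f⁰(x), v⟩ for all x ∈ G and all v ∈ H_L; equivalently f⁰(x) = ∫_{G₁} L_{h⁻¹}(f(hx)) dμ_{G₁}(h) as a Bochner integral, the integrand being a norm-continuous compactly supported function of h. The function f⁰ is norm-continuous, satisfies f⁰(hx) = L_h(f⁰(x)) for all h ∈ G₁ and x ∈ G, and vanishes outside the set G₁K. -/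
open MeasureTheory Set Filter
open scoped Pointwise Topology

/-!
The integrand `h ↦ L_{h⁻¹} f(h x)` is jointly continuous in `(x, h)`: by Banach–Steinhaus the
strongly continuous `L` is norm-bounded on compacts, which upgrades strong continuity to
continuity of `(h, w) ↦ L_h w`. For `x` in a compact set `V` it is supported in the compact set
`G₁ ∩ (supp f) V⁻¹`, so `f⁰(x) = ∫ L_{h⁻¹} f(h x) dh` is a Bochner integral which is locally an
integral over a fixed compact set, hence continuous in `x`. Pairing with `⟨J ·, v⟩` commutes with
the integral, and `J² = 1` gives uniqueness. Equivariance is the substitution `h ↦ h h₀⁻¹`,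
allowed by right invariance of `μ₁`, together with `L_{h₀} L_{h⁻¹} = L_{h₀ h⁻¹}`.
-/

section StronglyContinuous

variable {X 𝕜 E F : Type*} [TopologicalSpace X] [NontriviallyNormedField 𝕜]
  [NormedAddCommGroup E] [NormedSpace 𝕜 E] [CompleteSpace E]
  [NormedAddCommGroup F] [NormedSpace 𝕜 F]

theorem IsCompact.exists_bound_of_continuousOn_apply {K : Set X} (hK : IsCompact K)
    {T : X → E →L[𝕜] F} (hT : ∀ v, ContinuousOn (T · v) K) :
    ∃ C, ∀ x ∈ K, ‖T x‖ ≤ C := by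
  obtain ⟨C, hC⟩ := banach_steinhaus (g := fun x : K => T x) fun v => by
    obtain ⟨C, hC⟩ := hK.exists_bound_of_continuousOn (hT v)
    exact ⟨C, fun x => hC x x.2⟩
  exact ⟨C, fun x hx => hC ⟨x, hx⟩⟩

theorem Continuous.clm_apply_of_continuous_apply [WeaklyLocallyCompactSpace X]
    {T : X → E →L[𝕜] F} (hT : ∀ v, Continuous (T · v)) {g : X → E} (hg : Continuous g) :
    Continuous fun x => T x (g x) := by
  refine continuous_iff_continuousAt.2 fun x₀ => ?_
  obtain ⟨K, hK, hKx₀⟩ := exists_compact_mem_nhds x₀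
  obtain ⟨M, hM⟩ := hK.exists_bound_of_continuousOn_apply fun v => (hT v).continuousOn
  have hbound : ∀ᶠ x in 𝓝 x₀, ‖T x (g x) - T x₀ (g x₀)‖ ≤
      M * ‖g x - g x₀‖ + ‖T x (g x₀) - T x₀ (g x₀)‖ := by
    filter_upwards [hKx₀] with x hx
    calc ‖T x (g x) - T x₀ (g x₀)‖
        = ‖T x (g x - g x₀) + (T x (g x₀) - T x₀ (g x₀))‖ := by rw [map_sub]; abel_nf
      _ ≤ ‖T x‖ * ‖g x - g x₀‖ + ‖T x (g x₀) - T x₀ (g x₀)‖ := by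
          grw [norm_add_le, (T x).le_opNorm]
      _ ≤ M * ‖g x - g x₀‖ + ‖T x (g x₀) - T x₀ (g x₀)‖ := by gcongr; exact hM x hx
  have hlim : Tendsto (fun x => M * ‖g x - g x₀‖ + ‖T x (g x₀) - T x₀ (g x₀)‖) (𝓝 x₀) (𝓝 0) := by
    simpa using ((tendsto_iff_norm_sub_tendsto_zero.1 (hg.tendsto x₀)).const_mul M).add
      (tendsto_iff_norm_sub_tendsto_zero.1 ((hT (g x₀)).tendsto x₀))
  exact tendsto_iff_norm_sub_tendsto_zero.2
    (squeeze_zero' (.of_forall fun _ => norm_nonneg _) hbound hlim)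

end StronglyContinuous

theorem integral_inner_left {α 𝕜 E : Type*} [MeasurableSpace α] {μ : Measure α} [RCLike 𝕜]
    [NormedAddCommGroup E] [InnerProductSpace 𝕜 E] [CompleteSpace E] [NormedSpace ℝ E]
    {φ : α → E} (hφ : Integrable φ μ) (v : E) :
    ∫ a, inner 𝕜 (φ a) v ∂μ = inner 𝕜 (∫ a, φ a ∂μ) v := by
  simp_rw [← inner_conj_symm _ v]
  rw [integral_conj, integral_inner hφ]

section TwistedTranslate

variable {G 𝕜 E : Type*} [Group G] {G₁ : Subgroup G}
  [RCLike 𝕜] [NormedAddCommGroup E] [NormedSpace 𝕜 E]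

def twistedTranslate (L : G₁ → E →L[𝕜] E) (f : G → E) (x : G) (h : G₁) : E :=
  L h⁻¹ (f (h * x))

variable {L : G₁ → E →L[𝕜] E} {f : G → E}

theorem integral_twistedTranslate_mul [MeasurableSpace G₁] {μ₁ : Measure G₁} [MeasurableMul G₁]
    [μ₁.IsMulRightInvariant] [NormedSpace ℝ E] [CompleteSpace E]
    (hLmul : ∀ a b : G₁, L (a * b) = (L a).comp (L b)) {x : G}
    (hint : Integrable (twistedTranslate L f x) μ₁) (h₀ : G₁) :
    ∫ h, twistedTranslate L f (h₀ * x) h ∂μ₁ = L h₀ (∫ h, twistedTranslate L f x h ∂μ₁) := by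
  have hshift : ∀ h : G₁,
      twistedTranslate L f (h₀ * x) (h * h₀⁻¹) = L h₀ (twistedTranslate L f x h) := fun h => by
    simp only [twistedTranslate, mul_inv_rev, inv_inv, hLmul, ContinuousLinearMap.comp_apply,
      Subgroup.coe_mul, Subgroup.coe_inv, mul_assoc, inv_mul_cancel_left]
  rw [← integral_mul_right_eq_self _ h₀⁻¹, ← (L h₀).integral_comp_comm hint]
  simp_rw [hshift]

variable [TopologicalSpace G]

theorem twistedTranslate_eq_zero_of_notMem {V : Set G} {x : G} (hx : x ∈ V) {h : G₁}
    (hh : (h : G) ∉ tsupport f * V⁻¹) : twistedTranslate L f x h = 0 := by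
  have hf : f (h * x) = 0 :=
    image_eq_zero_of_notMem_tsupport fun hhx => hh ⟨_, hhx, x⁻¹, inv_mem_inv.2 hx, by group⟩
  simp [twistedTranslate, hf]

theorem twistedTranslate_eq_zero_of_notMem_mul {x : G} (hx : x ∉ (G₁ : Set G) * tsupport f) :
    twistedTranslate L f x = 0 := by
  ext h
  have hf : f (h * x) = 0 :=
    image_eq_zero_of_notMem_tsupport fun hhx => hx ⟨_, (h⁻¹ : G₁).2, _, hhx, by simp⟩
  simp [twistedTranslate, hf]

variable [IsTopologicalGroup G]

theorem hasCompactSupport_twistedTranslate (hG₁ : IsClosed (G₁ : Set G))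
    (hf : HasCompactSupport f) (x : G) : HasCompactSupport (twistedTranslate L f x) :=
  .intro (hG₁.isClosedEmbedding_subtypeVal.isCompact_preimage
      (hf.mul (isCompact_singleton (x := x)).inv))
    fun _ hh => twistedTranslate_eq_zero_of_notMem (mem_singleton x) hh

theorem continuous_twistedTranslate_uncurry [WeaklyLocallyCompactSpace G]
    [WeaklyLocallyCompactSpace G₁] [CompleteSpace E] (hL : ∀ v, Continuous (L · v))
    (hf : Continuous f) : Continuous (Function.uncurry (twistedTranslate L f)) :=
  Continuous.clm_apply_of_continuous_apply
    (fun v => (hL v).comp (continuous_inv.comp continuous_snd))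
    (hf.comp ((continuous_subtype_val.comp continuous_snd).mul continuous_fst))

theorem continuous_integral_twistedTranslate [LocallyCompactSpace G] [FirstCountableTopology G]
    [WeaklyLocallyCompactSpace G₁] [MeasurableSpace G₁] [OpensMeasurableSpace G₁]
    {μ₁ : Measure G₁} [IsLocallyFiniteMeasure μ₁] [SecondCountableTopologyEither G₁ E]
    [NormedSpace ℝ E] [CompleteSpace E] (hG₁ : IsClosed (G₁ : Set G))
    (hL : ∀ v, Continuous (L · v)) (hf : Continuous f) (hfc : HasCompactSupport f) :
    Continuous fun x => ∫ h, twistedTranslate L f x h ∂μ₁ := by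
  refine continuous_iff_continuousAt.2 fun x₀ => ?_
  obtain ⟨V, hV, hVx₀⟩ := exists_compact_mem_nhds x₀
  set C : Set G₁ := (↑) ⁻¹' (tsupport f * V⁻¹)
  have hC : IsCompact C := hG₁.isClosedEmbedding_subtypeVal.isCompact_preimage (hfc.mul hV.inv)
  have hlocal : (fun x => ∫ h in C, twistedTranslate L f x h ∂μ₁) =ᶠ[𝓝 x₀]
      fun x => ∫ h, twistedTranslate L f x h ∂μ₁ := by
    filter_upwards [hVx₀] with x hx
    exact setIntegral_eq_integral_of_forall_compl_eq_zero fun h hh =>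
      twistedTranslate_eq_zero_of_notMem hx hh
  exact (continuous_parametric_integral_of_continuous
    (continuous_twistedTranslate_uncurry hL hf) hC).continuousAt.congr hlocal

end TwistedTranslate

theorem stmt10_general
    {G : Type*} [Group G] [TopologicalSpace G] [IsTopologicalGroup G]
    [LocallyCompactSpace G] [SecondCountableTopology G]
    [MeasurableSpace G] [BorelSpace G]
    (G₁ : Subgroup G) (hG₁ : IsClosed (G₁ : Set G))
    (μ₁ : Measure ↥G₁) [μ₁.IsMulRightInvariant]
    [IsFiniteMeasureOnCompacts μ₁]
    {H : Type*} [NormedAddCommGroup H] [InnerProductSpace ℂ H] [CompleteSpace H]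
    (J : H →L[ℂ] H)
    (hJ2 : ∀ v : H, J (J v) = v)
    (L : ↥G₁ → H →L[ℂ] H)
    (hLmul : ∀ a b : ↥G₁, L (a * b) = (L a).comp (L b))
    (hLcont : ∀ v : H, Continuous fun h : ↥G₁ => L h v)
    (f : G → H) (hf : Continuous f) (hfc : HasCompactSupport f) :
    ∃ f0 : G → H,
      (∀ (x : G) (v : H),
        ∫ h : ↥G₁, (inner ℂ (J (L (h⁻¹) (f ((h : G) * x)))) v : ℂ) ∂μ₁
          = inner ℂ (J (f0 x)) v) ∧
      (∀ g : G → H,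
        (∀ (x : G) (v : H),
          ∫ h : ↥G₁, (inner ℂ (J (L (h⁻¹) (f ((h : G) * x)))) v : ℂ) ∂μ₁
            = inner ℂ (J (g x)) v) → g = f0) ∧
      (∀ x : G, Continuous fun h : ↥G₁ => L (h⁻¹) (f ((h : G) * x))) ∧
      (∀ x : G, HasCompactSupport fun h : ↥G₁ => L (h⁻¹) (f ((h : G) * x))) ∧
      (∀ x : G, f0 x = ∫ h : ↥G₁, L (h⁻¹) (f ((h : G) * x)) ∂μ₁) ∧
      Continuous f0 ∧
      (∀ (h : ↥G₁) (x : G), f0 ((h : G) * x) = L h (f0 x)) ∧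
      (∀ x : G, x ∉ (G₁ : Set G) * tsupport f → f0 x = 0) := by
  have : SecondCountableTopology G₁ := Topology.IsEmbedding.subtypeVal.secondCountableTopology
  have : BorelSpace G₁ := Subtype.borelSpace _
  have : LocallyCompactSpace G₁ := hG₁.isClosedEmbedding_subtypeVal.locallyCompactSpace
  have hcont (x : G) : Continuous (twistedTranslate L f x) :=
    (continuous_twistedTranslate_uncurry hLcont hf).comp (continuous_const.prodMk continuous_id)
  have hsupp (x : G) : HasCompactSupport (twistedTranslate L f x) :=
    hasCompactSupport_twistedTranslate hG₁ hfc x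
  have hint (x : G) : Integrable (twistedTranslate L f x) μ₁ :=
    (hcont x).integrable_of_hasCompactSupport (hsupp x)
  have hpair (x : G) (v : H) : ∫ h, inner ℂ (J (twistedTranslate L f x h)) v ∂μ₁ =
      inner ℂ (J (∫ h, twistedTranslate L f x h ∂μ₁)) v := by
    rw [integral_inner_left (J.integrable_comp (hint x)), J.integral_comp_comm (hint x)]
  refine ⟨fun x => ∫ h, twistedTranslate L f x h ∂μ₁, hpair, fun g hg => ?_, hcont, hsupp,
    fun _ => rfl, continuous_integral_twistedTranslate hG₁ hLcont hf hfc,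
    fun h x => integral_twistedTranslate_mul hLmul (hint x) h, fun x hx => ?_⟩
  · funext x
    exact Function.LeftInverse.injective hJ2 <|
      ext_inner_right ℂ fun v => (hg x v).symm.trans (hpair x v)
  · simp [twistedTranslate_eq_zero_of_notMem_mul hx]

theorem stmt10
    {G : Type*} [Group G] [TopologicalSpace G] [IsTopologicalGroup G]
    [LocallyCompactSpace G] [SecondCountableTopology G] [T2Space G]
    [MeasurableSpace G] [BorelSpace G]
    (G₁ : Subgroup G) (hG₁ : IsClosed (G₁ : Set G))
    (μ₁ : Measure ↥G₁) [SigmaFinite μ₁] [μ₁.IsMulRightInvariant]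
    [IsFiniteMeasureOnCompacts μ₁] [μ₁.IsOpenPosMeasure]
    {H : Type*} [NormedAddCommGroup H] [InnerProductSpace ℂ H] [CompleteSpace H]
    [SecondCountableTopology H]
    (J : H →L[ℂ] H)
    (hJsa : ∀ v w : H, (inner ℂ (J v) w : ℂ) = inner ℂ v (J w))
    (hJ2 : ∀ v : H, J (J v) = v)
    (L : ↥G₁ → H →L[ℂ] H)
    (hL1 : L 1 = ContinuousLinearMap.id ℂ H)
    (hLmul : ∀ a b : ↥G₁, L (a * b) = (L a).comp (L b))
    (hLcont : ∀ v : H, Continuous fun h : ↥G₁ => L h v)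
    (hLbdd : ∀ K' : Set ↥G₁, IsCompact K' → ∃ M : ℝ, ∀ h ∈ K', ‖L h‖ ≤ M)
    (hLKrein : ∀ (h : ↥G₁) (v w : H), (inner ℂ (J (L h v)) (L h w) : ℂ) = inner ℂ (J v) w)
    (f : G → H) (hf : Continuous f) (hfc : HasCompactSupport f) :
    ∃ f0 : G → H,
      (∀ (x : G) (v : H),
        ∫ h : ↥G₁, (inner ℂ (J (L (h⁻¹) (f ((h : G) * x)))) v : ℂ) ∂μ₁
          = inner ℂ (J (f0 x)) v) ∧
      (∀ g : G → H,
        (∀ (x : G) (v : H),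
          ∫ h : ↥G₁, (inner ℂ (J (L (h⁻¹) (f ((h : G) * x)))) v : ℂ) ∂μ₁
            = inner ℂ (J (g x)) v) → g = f0) ∧
      (∀ x : G, Continuous fun h : ↥G₁ => L (h⁻¹) (f ((h : G) * x))) ∧
      (∀ x : G, HasCompactSupport fun h : ↥G₁ => L (h⁻¹) (f ((h : G) * x))) ∧
      (∀ x : G, f0 x = ∫ h : ↥G₁, L (h⁻¹) (f ((h : G) * x)) ∂μ₁) ∧
      Continuous f0 ∧
      (∀ (h : ↥G₁) (x : G), f0 ((h : G) * x) = L h (f0 x)) ∧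
      (∀ x : G, x ∉ (G₁ : Set G) * tsupport f → f0 x = 0) :=
  stmt10_general G₁ hG₁ μ₁ J hJ2 L hLmul hLcont f hf hfc
end

section
/- For each fixed x ∈ G, the set of vectors f⁰(x) := ∫_{G₁} L_{h⁻¹}(f(hx)) dμ_{G₁}(h), as f ranges over all continuous compactly supported functions from G to H_L, is a dense linear subspace of H_L. -/
/-!
For `v ∈ H_L`, take `f(g) = ψ(g x⁻¹) v` with `ψ ≥ 0` a bump function on `G` around `1`, normalised
so that `∫_{G₁} ψ = 1`. Then `f⁰(x) = ∫_{G₁} ψ(h) L_{h⁻¹} v dμ(h)` is an average of vectors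
`L_{h⁻¹} v` with `h` near `1`, which are close to `L_1 v = v` by strong continuity. Linearity of
`f ↦ f⁰(x)` needs integrability of `h ↦ L_{h⁻¹}(f(hx))`, i.e. its continuity, which follows from
strong continuity together with the local uniform bound on `‖L_h‖`.
-/

open MeasureTheory Set Filter Topology
open scoped CompactlySupported

section StronglyContinuous

variable {X 𝕜 E F : Type*} [TopologicalSpace X] [NontriviallyNormedField 𝕜]
  [SeminormedAddCommGroup E] [NormedSpace 𝕜 E] [NormedAddCommGroup F] [NormedSpace 𝕜 F]
  {A : X → E →L[𝕜] F}

theorem continuous_clm_apply_of_locally_bounded (hA : ∀ v, Continuous fun x => A x v)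
    (hbdd : ∀ x, ∃ M, ∀ᶠ y in 𝓝 x, ‖A y‖ ≤ M) {g : X → E} (hg : Continuous g) :
    Continuous fun x => A x (g x) := by
  refine continuous_iff_continuousAt.2 fun x => ?_
  obtain ⟨M, hM⟩ := hbdd x
  have hsmall : Tendsto (fun y => A y (g y - g x)) (𝓝 x) (𝓝 0) := by
    refine squeeze_zero_norm' (a := fun y => M * ‖g y - g x‖)
      (hM.mono fun y hy => (A y).le_of_opNorm_le hy _) ?_
    simpa using (((hg.tendsto x).sub_const (g x)).norm).const_mul M
  simpa [ContinuousAt] using hsmall.add ((hA (g x)).tendsto x)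

theorem integrable_clm_apply_comp {K : Type*} [TopologicalSpace K] [MeasurableSpace K]
    [OpensMeasurableSpace K] (μ : Measure K) [IsFiniteMeasureOnCompacts μ] {B : K → E →L[𝕜] F}
    {e : K → X} (he : IsClosedEmbedding e) (hB : ∀ v, Continuous fun k => B k v)
    (hbdd : ∀ k, ∃ M, ∀ᶠ j in 𝓝 k, ‖B j‖ ≤ M) (f : C_c(X, E)) :
    Integrable (fun k => B k (f (e k))) μ := by
  refine (continuous_clm_apply_of_locally_bounded hB hbdd (f.continuous.comp he.continuous))
    |>.integrable_of_hasCompactSupport ?_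
  refine (f.hasCompactSupport.comp_isClosedEmbedding he).mono fun k hk h0 => hk ?_
  simp_all

end StronglyContinuous

theorem exists_eventually_norm_le_of_isCompact {X F : Type*} [TopologicalSpace X]
    [LocallyCompactSpace X] [Norm F] {A : X → F}
    (hbdd : ∀ K, IsCompact K → ∃ M, ∀ x ∈ K, ‖A x‖ ≤ M) (x : X) :
    ∃ M, ∀ᶠ y in 𝓝 x, ‖A y‖ ≤ M := by
  obtain ⟨K, hK, hKx⟩ := exists_compact_mem_nhds x
  obtain ⟨M, hM⟩ := hbdd K hK
  exact ⟨M, mem_of_superset hKx hM⟩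

theorem norm_integral_smul_sub_le {K E : Type*} [MeasurableSpace K] {μ : Measure K}
    [NormedAddCommGroup E] [NormedSpace ℝ E] [CompleteSpace E] {φ : K → ℝ} {T : K → E} {v : E}
    {ε : ℝ}
    (hφ : 0 ≤ φ) (hφ1 : ∫ k, φ k ∂μ = 1) (hφT : Integrable (fun k => φ k • T k) μ)
    (hT : ∀ k, φ k ≠ 0 → ‖T k - v‖ ≤ ε) :
    ‖∫ k, φ k • T k ∂μ - v‖ ≤ ε := by
  have hφi : Integrable φ μ := by
    by_contra h
    simp [integral_undef h] at hφ1
  have hv : ∫ k, φ k • v ∂μ = v := by rw [integral_smul_const, hφ1, one_smul]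
  calc ‖∫ k, φ k • T k ∂μ - v‖ = ‖∫ k, φ k • (T k - v) ∂μ‖ := by
        simp_rw [smul_sub]
        rw [integral_sub hφT (hφi.smul_const v), hv]
    _ ≤ ∫ k, φ k * ε ∂μ := by
        refine norm_integral_le_of_norm_le (hφi.mul_const ε) (ae_of_all _ fun k => ?_)
        rw [norm_smul, Real.norm_of_nonneg (hφ k)]
        rcases eq_or_ne (φ k) 0 with h0 | h0
        · simp [h0]
        · exact mul_le_mul_of_nonneg_left (hT k h0) (hφ k)
    _ = ε := by rw [integral_mul_const, hφ1, one_mul]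

section TwistedIntegral

variable {K X 𝕜 E : Type*} [MeasurableSpace K] [TopologicalSpace X] [RCLike 𝕜]
  [NormedAddCommGroup E] [NormedSpace ℝ E] [NormedSpace 𝕜 E] [IsScalarTower ℝ 𝕜 E]
  (μ : Measure K) {A : K → E →L[𝕜] E} {e : K → X}

/-- `f⁰(x)` is the case `K = G₁`, `A h = L_{h⁻¹}`, `e h = h x`. -/
noncomputable def twistedIntegral (A : K → E →L[𝕜] E) (e : K → X)
    (hint : ∀ f : C_c(X, E), Integrable (fun k => A k (f (e k))) μ) : C_c(X, E) →ₗ[𝕜] E where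
  toFun f := ∫ k, A k (f (e k)) ∂μ
  map_add' f g := by
    simp only [CompactlySupportedContinuousMap.add_apply, map_add,
      integral_add (hint f) (hint g)]
  map_smul' c f := by simp [integral_smul]

theorem range_twistedIntegral
    (hint : ∀ f : C_c(X, E), Integrable (fun k => A k (f (e k))) μ) :
    range (twistedIntegral μ A e hint) =
      {v | ∃ f : X → E, Continuous f ∧ HasCompactSupport f ∧ v = ∫ k, A k (f (e k)) ∂μ} := by
  ext v
  constructor
  · rintro ⟨f, rfl⟩
    exact ⟨f, f.continuous, f.hasCompactSupport, rfl⟩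
  · rintro ⟨f, hf, hfc, rfl⟩
    exact ⟨⟨⟨f, hf⟩, hfc⟩, rfl⟩

theorem exists_bump_integral_comp_eq_one [TopologicalSpace K] [OpensMeasurableSpace K]
    [IsFiniteMeasureOnCompacts μ] [μ.IsOpenPosMeasure] [LocallyCompactSpace X] [RegularSpace X]
    (he : IsClosedEmbedding e) {U : Set X} (hU : IsOpen U) {k₀ : K} (hk₀ : e k₀ ∈ U) :
    ∃ ψ : X → ℝ, Continuous ψ ∧ HasCompactSupport ψ ∧ 0 ≤ ψ ∧ Function.support ψ ⊆ U ∧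
      ∫ k, ψ (e k) ∂μ = 1 := by
  obtain ⟨ψ, hψ1, hψ0, hψc, hψ01⟩ := exists_continuous_one_zero_of_isCompact isCompact_singleton
    hU.isClosed_compl (disjoint_singleton_left.2 (not_not.2 hk₀))
  have hφc : Continuous fun k => ψ (e k) := ψ.continuous.comp he.continuous
  have hφi : Integrable (fun k => ψ (e k)) μ :=
    hφc.integrable_of_hasCompactSupport (hψc.comp_isClosedEmbedding he)
  have hc : 0 < ∫ k, ψ (e k) ∂μ := by
    refine (integral_pos_iff_support_of_nonneg (fun k => (hψ01 _).1) hφi).2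
      (hφc.isOpen_support.measure_pos μ ⟨k₀, ?_⟩)
    simp [hψ1 (mem_singleton (e k₀))]
  refine ⟨(∫ k, ψ (e k) ∂μ)⁻¹ • ψ, by fun_prop, hψc.smul_left, fun y => ?_, fun y hy => ?_, ?_⟩
  · exact mul_nonneg (inv_nonneg.2 hc.le) (hψ01 y).1
  · by_contra hyU
    simp [hψ0 hyU] at hy
  · simp [integral_const_mul, inv_mul_cancel₀ hc.ne']

theorem dense_range_twistedIntegral [TopologicalSpace K] [OpensMeasurableSpace K]
    [IsFiniteMeasureOnCompacts μ] [μ.IsOpenPosMeasure] [LocallyCompactSpace X] [RegularSpace X]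
    [CompleteSpace E] (he : IsClosedEmbedding e) (hA : ∀ v, Continuous fun k => A k v)
    {k₀ : K} (hk₀ : A k₀ = ContinuousLinearMap.id 𝕜 E)
    (hint : ∀ f : C_c(X, E), Integrable (fun k => A k (f (e k))) μ) :
    Dense (range (twistedIntegral μ A e hint)) := by
  refine fun v => Metric.mem_closure_iff.2 fun ε hε => ?_
  have hV : IsOpen {k | ‖A k v - v‖ < ε / 2} :=
    isOpen_lt ((hA v).sub continuous_const).norm continuous_const
  obtain ⟨U, hU, hUV⟩ := he.isInducing.isOpen_iff.1 hV
  have hk₀U : e k₀ ∈ U := by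
    rw [← mem_preimage, hUV]
    simpa [hk₀] using hε
  obtain ⟨ψ, hψc, hψs, hψ, hψU, hψ1⟩ := exists_bump_integral_comp_eq_one μ he hU hk₀U
  let f : C_c(X, E) := ⟨⟨fun y => ψ y • v, by fun_prop⟩, hψs.smul_right⟩
  have hfe : (fun k => A k (f (e k))) = fun k => ψ (e k) • A k v := by
    ext k
    exact (A k).map_smul_of_tower _ v
  refine ⟨_, ⟨f, rfl⟩, ?_⟩
  rw [dist_comm, dist_eq_norm]
  change ‖∫ k, A k (f (e k)) ∂μ - v‖ < ε
  rw [hfe]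
  have hclose := norm_integral_smul_sub_le (φ := (ψ <| e ·)) (fun k => hψ _) hψ1 (hfe ▸ hint f)
    fun k hk => (hUV.le (hψU hk) : ‖A k v - v‖ < ε / 2).le
  exact hclose.trans_lt (half_lt_self hε)

end TwistedIntegral

theorem stmt11_general
    {G : Type*} [Group G] [TopologicalSpace G] [IsTopologicalGroup G]
    [LocallyCompactSpace G]
    [MeasurableSpace G] [BorelSpace G]
    (G₁ : Subgroup G) (hG₁ : IsClosed (G₁ : Set G))
    (μ₁ : Measure ↥G₁)
    [IsFiniteMeasureOnCompacts μ₁] [μ₁.IsOpenPosMeasure]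
    {H : Type*} [NormedAddCommGroup H] [InnerProductSpace ℂ H] [CompleteSpace H]
    (L : ↥G₁ → H →L[ℂ] H)
    (hL1 : L 1 = ContinuousLinearMap.id ℂ H)
    (hLcont : ∀ v : H, Continuous fun h : ↥G₁ => L h v)
    (hLbdd : ∀ K' : Set ↥G₁, IsCompact K' → ∃ M : ℝ, ∀ h ∈ K', ‖L h‖ ≤ M)
    :
    ∀ x : G,
      ∃ S : Submodule ℂ H,
        (S : Set H) =
          {v : H | ∃ f : G → H, Continuous f ∧ HasCompactSupport f ∧
            v = ∫ h : ↥G₁, L (h⁻¹) (f ((h : G) * x)) ∂μ₁} ∧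
        Dense (S : Set H) := by
  intro x
  have hval : IsClosedEmbedding ((↑) : G₁ → G) := hG₁.isClosedEmbedding_subtypeVal
  have : LocallyCompactSpace G₁ := hval.locallyCompactSpace
  have he : IsClosedEmbedding fun h : G₁ => (h : G) * x :=
    (Homeomorph.mulRight x).isClosedEmbedding.comp hval
  have hA : ∀ v, Continuous fun h : G₁ => L h⁻¹ v := fun v => (hLcont v).comp continuous_inv
  have hbdd : ∀ h₀ : G₁, ∃ M, ∀ᶠ h in 𝓝 h₀, ‖L h⁻¹‖ ≤ M := fun h₀ => by
    obtain ⟨M, hM⟩ := exists_eventually_norm_le_of_isCompact hLbdd h₀⁻¹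
    exact ⟨M, continuous_inv.continuousAt.eventually hM⟩
  have hint := integrable_clm_apply_comp μ₁ he hA hbdd
  refine ⟨LinearMap.range (twistedIntegral μ₁ _ _ hint), ?_, ?_⟩ <;> rw [LinearMap.coe_range]
  · exact range_twistedIntegral μ₁ hint
  · exact dense_range_twistedIntegral μ₁ he hA (k₀ := 1) (by simpa using hL1) hint

theorem stmt11
    {G : Type*} [Group G] [TopologicalSpace G] [IsTopologicalGroup G]
    [LocallyCompactSpace G] [SecondCountableTopology G] [T2Space G]
    [MeasurableSpace G] [BorelSpace G]
    (G₁ : Subgroup G) (hG₁ : IsClosed (G₁ : Set G))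
    (μ₁ : Measure ↥G₁) [SigmaFinite μ₁] [μ₁.IsMulRightInvariant]
    [IsFiniteMeasureOnCompacts μ₁] [μ₁.IsOpenPosMeasure]
    {H : Type*} [NormedAddCommGroup H] [InnerProductSpace ℂ H] [CompleteSpace H]
    [SecondCountableTopology H]
    (J : H →L[ℂ] H)
    (hJsa : ∀ v w : H, (inner ℂ (J v) w : ℂ) = inner ℂ v (J w))
    (hJ2 : ∀ v : H, J (J v) = v)
    (L : ↥G₁ → H →L[ℂ] H)
    (hL1 : L 1 = ContinuousLinearMap.id ℂ H)
    (hLmul : ∀ a b : ↥G₁, L (a * b) = (L a).comp (L b))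
    (hLcont : ∀ v : H, Continuous fun h : ↥G₁ => L h v)
    (hLbdd : ∀ K' : Set ↥G₁, IsCompact K' → ∃ M : ℝ, ∀ h ∈ K', ‖L h‖ ≤ M)
    (hLKrein : ∀ (h : ↥G₁) (v w : H), (inner ℂ (J (L h v)) (L h w) : ℂ) = inner ℂ (J v) w)
    :
    ∀ x : G,
      ∃ S : Submodule ℂ H,
        (S : Set H) =
          {v : H | ∃ f : G → H, Continuous f ∧ HasCompactSupport f ∧
            v = ∫ h : ↥G₁, L (h⁻¹) (f ((h : G) * x)) ∂μ₁} ∧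
        Dense (S : Set H) :=
  stmt11_general G₁ hG₁ μ₁ L hL1 hLcont hLbdd
end

section
/- The map t ↦ π(x_c t) from G₂ to X induces a well-defined, injective, continuous, G₂-equivariant map ψ of the coset space G₂/G_{x_c} into X whose image is exactly the G₂-orbit C of π(x_c); moreover ψ is a Borel isomorphism onto C: the image under ψ of every Borel subset of G₂/G_{x_c} is a Borel subset of X (in particular C itself is Borel in X), and the inverse map ψ⁻¹ : C → G₂/G_{x_c} is Borel measurable. Equivariance means that if [t] ∈ G₂/G_{x_c} and [z] = ψ([t]) ∈ C, then for every η ∈ G₂ also ψ([tη]) = [zη]. -/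
open MeasureTheory Set

/-!
The relation `π (x_c a) = π (x_c b)` on `G₂` is exactly `b a⁻¹ ∈ G_{x_c}`, so the orbit map
`t ↦ π (x_c t)` descends to a continuous injection `ψ` of `G₂ ⧸ G_{x_c}` onto the orbit. The coset
space is the image of the locally compact second-countable group `G₂` under an open quotient map,
hence itself locally compact and second countable, and it is Hausdorff because `ψ` injects it
continuously into `X`. Such a space is Polish, so by the Lusin–Souslin theorem the continuous
injection `ψ` is a measurable embedding.
-/

theorem Dense.isOpen_of_locallyCompactSpace {Z : Type*} [TopologicalSpace Z] [T2Space Z]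
    {s : Set Z} (hs : Dense s) [LocallyCompactSpace s] : IsOpen s := by
  refine isOpen_iff_mem_nhds.2 fun x hx => ?_
  obtain ⟨K, hKc, hK⟩ := exists_compact_mem_nhds (⟨x, hx⟩ : s)
  obtain ⟨U, hU, hUK⟩ := (mem_nhds_subtype s _ K).1 hK
  obtain ⟨V, hVU, hV, hxV⟩ := mem_nhds_iff.1 hU
  have hKs : ((↑) '' K : Set Z) ⊆ s := by rintro _ ⟨k, -, rfl⟩; exact k.2
  have hVK : V ⊆ (↑) '' K :=
    calc V ⊆ closure (V ∩ s) := hs.open_subset_closure_inter hV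
      _ ⊆ closure ((↑) '' K) := closure_mono fun z hz => ⟨⟨z, hz.2⟩, hUK (hVU hz.1), rfl⟩
      _ = (↑) '' K := (hKc.image continuous_subtype_val).isClosed.closure_eq
  exact Filter.mem_of_superset (hV.mem_nhds hxV) (hVK.trans hKs)

theorem PolishSpace.of_locallyCompactSpace (Y : Type*) [TopologicalSpace Y] [T2Space Y]
    [LocallyCompactSpace Y] [SecondCountableTopology Y] : PolishSpace Y := by
  let : MetricSpace Y := TopologicalSpace.metrizableSpaceMetric Y
  have hemb := (UniformSpace.Completion.coe_isometry (α := Y)).isEmbedding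
  have : LocallyCompactSpace (range ((↑) : Y → UniformSpace.Completion Y)) :=
    hemb.toHomeomorph.locallyCompactSpace_iff.1 ‹_›
  have : SecondCountableTopology (UniformSpace.Completion Y) :=
    UniformSpace.secondCountable_of_separable _
  have : PolishSpace (range ((↑) : Y → UniformSpace.Completion Y)) :=
    UniformSpace.Completion.denseRange_coe.isOpen_of_locallyCompactSpace.polishSpace
  exact hemb.toHomeomorph.isClosedEmbedding.polishSpace

theorem Continuous.measurableEmbedding_of_locallyCompactSpace {Y Z : Type*}
    [TopologicalSpace Y] [LocallyCompactSpace Y] [SecondCountableTopology Y]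
    [MeasurableSpace Y] [BorelSpace Y]
    [TopologicalSpace Z] [T2Space Z] [MeasurableSpace Z] [BorelSpace Z]
    {f : Y → Z} (hf : Continuous f) (hinj : Function.Injective f) : MeasurableEmbedding f :=
  haveI := T2Space.of_injective_continuous hinj hf
  haveI := PolishSpace.of_locallyCompactSpace Y
  hf.measurableEmbedding hinj

section OrbitMap

variable {G X : Type*} [Group G] {π : G → X} {act : X → G → X}

theorem map_mul_congr_right (hπact : ∀ g g' : G, π (g * g') = act (π g) g') {g g' : G}
    (h : π g = π g') (k : G) : π (g * k) = π (g' * k) := by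
  rw [hπact, hπact, h]

theorem map_mul_eq_map_mul_iff (hπact : ∀ g g' : G, π (g * g') = act (π g) g') (x a b : G) :
    π (x * a) = π (x * b) ↔ π (x * (b * a⁻¹)) = π x :=
  ⟨fun h => by simpa [mul_assoc] using map_mul_congr_right hπact h.symm a⁻¹,
    fun h => by simpa [mul_assoc] using (map_mul_congr_right hπact h a).symm⟩

theorem ker_orbitMap_eq_rightRel (hπact : ∀ g g' : G, π (g * g') = act (π g) g')
    {K : Subgroup G} (H : Subgroup K) (x : G) (hH : ∀ t : K, t ∈ H ↔ π (x * t) = π x) :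
    Setoid.ker (fun t : K => π (x * t)) = QuotientGroup.rightRel H := by
  ext a b
  rw [Setoid.ker_def, QuotientGroup.rightRel_apply, hH, map_mul_eq_map_mul_iff hπact]
  rfl

end OrbitMap

theorem stmt12_general
    {G : Type*} [Group G] [TopologicalSpace G] [IsTopologicalGroup G]
    [LocallyCompactSpace G] [SecondCountableTopology G]
    (G₂ : Subgroup G) (hG₂ : IsClosed (G₂ : Set G))
    {X : Type*} [TopologicalSpace X] [TopologicalSpace.MetrizableSpace X]
    [MeasurableSpace X] [BorelSpace X]
    (π : G → X) (hπc : Continuous π)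
    (act : X → G → X)
    (hπact : ∀ g g' : G, π (g * g') = act (π g) g')
    (x_c : G)
    (Gx : Subgroup ↥G₂)
    (hGx : ∀ t : ↥G₂, t ∈ Gx ↔ π (x_c * (t : G)) = π x_c)
    (mY : MeasurableSpace (Quotient (QuotientGroup.rightRel Gx)))
    (hmY : mY = borel (Quotient (QuotientGroup.rightRel Gx))) :
    ∃ ψ : Quotient (QuotientGroup.rightRel Gx) → X,
      (∀ t : ↥G₂, ψ (Quotient.mk (QuotientGroup.rightRel Gx) t) = π (x_c * (t : G))) ∧
      Function.Injective ψ ∧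
      Continuous ψ ∧
      Set.range ψ = {y : X | ∃ η ∈ G₂, act (π x_c) η = y} ∧
      (∀ t η : ↥G₂,
        ψ (Quotient.mk (QuotientGroup.rightRel Gx) (t * η))
          = act (ψ (Quotient.mk (QuotientGroup.rightRel Gx) t)) (η : G)) ∧
      MeasurableSet {y : X | ∃ η ∈ G₂, act (π x_c) η = y} ∧
      (∀ E : Set X, MeasurableSet E → MeasurableSet[mY] (ψ ⁻¹' E)) ∧
      (∀ E : Set (Quotient (QuotientGroup.rightRel Gx)),
        MeasurableSet[mY] E → MeasurableSet (ψ '' E)) := by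
  subst hmY
  have hker := ker_orbitMap_eq_rightRel hπact Gx x_c hGx
  set ψ := Quotient.lift (fun t : G₂ => π (x_c * t)) hker.ge
  have hinj : Function.Injective ψ := (Setoid.lift_injective_iff_ker_eq_of_le _).2 hker
  have hcont : Continuous ψ :=
    (hπc.comp (continuous_const.mul continuous_subtype_val)).quotient_lift _
  have hrange : range ψ = {y : X | ∃ η ∈ G₂, act (π x_c) η = y} := by
    ext y
    simp [ψ, range_quotient_lift, hπact]
  have : LocallyCompactSpace G₂ := hG₂.locallyCompactSpace
  have : SecondCountableTopology G₂ := TopologicalSpace.Subtype.secondCountableTopology _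
  -- `rightRel Gx` is by definition the orbit relation of `Gx` acting on `G₂` on the left.
  have : LocallyCompactSpace (Quotient (QuotientGroup.rightRel Gx)) :=
    MulAction.isOpenQuotientMap_quotientMk.locallyCompactSpace
  have : SecondCountableTopology (Quotient (QuotientGroup.rightRel Gx)) :=
    ContinuousConstSMul.secondCountableTopology
  let := borel (Quotient (QuotientGroup.rightRel Gx))
  have : BorelSpace (Quotient (QuotientGroup.rightRel Gx)) := ⟨rfl⟩
  have hemb := hcont.measurableEmbedding_of_locallyCompactSpace hinj
  refine ⟨ψ, fun t => rfl, hinj, hcont, hrange, fun t η => ?_, hrange ▸ hemb.measurableSet_range,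
    fun E hE => hemb.measurable hE, fun E hE => hemb.measurableSet_image.2 hE⟩
  change π (x_c * ↑(t * η)) = act (π (x_c * t)) η
  rw [Subgroup.coe_mul, ← mul_assoc, hπact]

theorem stmt12
    {G : Type*} [Group G] [TopologicalSpace G] [IsTopologicalGroup G]
    [LocallyCompactSpace G] [SecondCountableTopology G] [T2Space G]
    [MeasurableSpace G] [BorelSpace G]
    (G₁ G₂ : Subgroup G) (hG₁ : IsClosed (G₁ : Set G)) (hG₂ : IsClosed (G₂ : Set G))
    {X : Type*} [TopologicalSpace X] [TopologicalSpace.MetrizableSpace X]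
    [LocallyCompactSpace X] [SecondCountableTopology X]
    [MeasurableSpace X] [BorelSpace X]
    (π : G → X) (hπc : Continuous π) (hπo : IsOpenMap π) (hπs : Function.Surjective π)
    (act : X → G → X) (hactc : Continuous fun q : X × G => act q.1 q.2)
    (hact1 : ∀ x : X, act x 1 = x)
    (hactm : ∀ (x : X) (g g' : G), act (act x g) g' = act x (g * g'))
    (hπact : ∀ g g' : G, π (g * g') = act (π g) g')
    (hπker : ∀ g g' : G, π g = π g' ↔ ∃ h ∈ G₁, g' = h * g)
    (x_c : G)
    (Gx : Subgroup ↥G₂)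
    (hGx : ∀ t : ↥G₂, t ∈ Gx ↔ π (x_c * (t : G)) = π x_c)
    (mY : MeasurableSpace (Quotient (QuotientGroup.rightRel Gx)))
    (hmY : mY = borel (Quotient (QuotientGroup.rightRel Gx))) :
    ∃ ψ : Quotient (QuotientGroup.rightRel Gx) → X,
      (∀ t : ↥G₂, ψ (Quotient.mk (QuotientGroup.rightRel Gx) t) = π (x_c * (t : G))) ∧
      Function.Injective ψ ∧
      Continuous ψ ∧
      Set.range ψ = {y : X | ∃ η ∈ G₂, act (π x_c) η = y} ∧
      (∀ t η : ↥G₂,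
        ψ (Quotient.mk (QuotientGroup.rightRel Gx) (t * η))
          = act (ψ (Quotient.mk (QuotientGroup.rightRel Gx) t)) (η : G)) ∧
      MeasurableSet {y : X | ∃ η ∈ G₂, act (π x_c) η = y} ∧
      (∀ E : Set X, MeasurableSet E → MeasurableSet[mY] (ψ ⁻¹' E)) ∧
      (∀ E : Set (Quotient (QuotientGroup.rightRel Gx)),
        MeasurableSet[mY] E → MeasurableSet (ψ '' E)) :=
  stmt12_general G₂ hG₂ π hπc act hπact x_c Gx hGx mY hmY
end

section
/- Let g : G₂ → H_L be weakly Borel and satisfy g(ηt) = L_{x_c η x_c⁻¹}(g(t)) for all η ∈ G_{x_c} and t ∈ G₂. Then the prescription f(ξ x_c t) := L_ξ(g(t)) for ξ ∈ G₁, t ∈ G₂ yields a well-defined function f on the double coset G₁x_cG₂ (i.e. if ξ₁x_ct₁ = ξ₂x_ct₂ then L_{ξ₁}(g(t₁)) = L_{ξ₂}(g(t₂))); this f is weakly Borel on G₁x_cG₂, satisfies f(ξx) = L_ξ(f(x)) for all ξ ∈ G₁ and x ∈ G₁x_cG₂, and its restriction t ↦ f(x_c t) equals g. Conversely, for every weakly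 Borel f : G₁x_cG₂ → H_L with f(ξx) = L_ξ(f(x)) for all ξ ∈ G₁, the function g(t) := f(x_c t) is weakly Borel on G₂ and satisfies g(ηt) = L_{x_c η x_c⁻¹}(g(t)) for η ∈ G_{x_c}. Thus f ↦ (t ↦ f(x_c t)) is a one-to-one correspondence between these two classes of functions. -/
open MeasureTheory Set
open scoped ENNReal Pointwise

def doubleCoset {G : Type*} [Group G] (G₁ G₂ : Subgroup G) (x_c : G) : Set G :=
  {y : G | ∃ ξ ∈ G₁, ∃ t ∈ G₂, y = ξ * x_c * t}

/-! The function `f` on `G₁ x_c G₂` is forced by `f (ξ x_c t) = L ξ (g t)`; it is well defined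
because `ξ₁ x_c t₁ = ξ₂ x_c t₂` makes `η = t₁ t₂⁻¹` an element of `G_{x_c}` with
`x_c η x_c⁻¹ = ξ₁⁻¹ ξ₂`, so the covariance of `g` matches the two values. Weak Borel measurability
of `f` on the double coset comes from that of `(ξ, t) ↦ L ξ (g t)` on `G₁ × G₂`: the map
`(ξ, t) ↦ ξ x_c t` is a continuous surjection from a Polish space onto the double coset, and
such maps detect measurability (Souslin). Polishness of `G` follows because a locally compact
group is complete for its right uniformity, which is countably generated. -/

open Filter Topology Uniformity in
theorem IsTopologicalGroup.polishSpace_of_locallyCompactSpace (G : Type*) [Group G]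
    [TopologicalSpace G] [IsTopologicalGroup G] [LocallyCompactSpace G]
    [SecondCountableTopology G] [T2Space G] : PolishSpace G := by
  let := IsTopologicalGroup.rightUniformSpace G
  have : IsRightUniformGroup G := ⟨rfl⟩
  have := IsRightUniformGroup.completeSpace_of_weaklyLocallyCompactSpace (G := G)
  have : (𝓤 G).IsCountablyGenerated := Filter.comap.isCountablyGenerated _ _
  infer_instance

theorem measurable_inner_apply_uncurry {𝕜 H X Y : Type*} [RCLike 𝕜] [NormedAddCommGroup H]
    [InnerProductSpace 𝕜 H] [CompleteSpace H] [TopologicalSpace X]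
    [TopologicalSpace.MetrizableSpace X] [SecondCountableTopology X] [MeasurableSpace X]
    [OpensMeasurableSpace X] [MeasurableSpace Y] {L : X → H →L[𝕜] H}
    (hL : ∀ w, Continuous fun x => L x w) {g : Y → H}
    (hg : ∀ v, Measurable fun y => (inner 𝕜 v (g y) : 𝕜)) (v : H) :
    Measurable fun q : X × Y => (inner 𝕜 v (L q.1 (g q.2)) : 𝕜) := by
  refine measurable_uncurry_of_continuous_of_measurable
    (u := fun x y => (inner 𝕜 v (L x (g y)) : 𝕜)) (fun y => continuous_const.inner (hL (g y)))
    fun x => ?_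
  simp_rw [← ContinuousLinearMap.adjoint_inner_left]
  exact hg _

namespace doubleCoset

variable {G : Type*} [Group G] {G₁ G₂ : Subgroup G} {x_c : G}

theorem mul_mul_mem {ξ t : G} (hξ : ξ ∈ G₁) (ht : t ∈ G₂) :
    ξ * x_c * t ∈ doubleCoset G₁ G₂ x_c :=
  ⟨ξ, hξ, t, ht, rfl⟩

theorem mul_mem {t : G} (ht : t ∈ G₂) : x_c * t ∈ doubleCoset G₁ G₂ x_c :=
  ⟨1, G₁.one_mem, t, ht, by rw [one_mul]⟩

theorem conj_mul_inv_eq_of_mul_mul_eq {ξ₁ ξ₂ t₁ t₂ : G}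
    (h : ξ₁ * x_c * t₁ = ξ₂ * x_c * t₂) : x_c * (t₁ * t₂⁻¹) * x_c⁻¹ = ξ₁⁻¹ * ξ₂ :=
  calc x_c * (t₁ * t₂⁻¹) * x_c⁻¹ = ξ₁⁻¹ * (ξ₁ * x_c * t₁) * (t₂⁻¹ * x_c⁻¹) := by group
    _ = ξ₁⁻¹ * (ξ₂ * x_c * t₂) * (t₂⁻¹ * x_c⁻¹) := by rw [h]
    _ = ξ₁⁻¹ * ξ₂ := by group

section Extension

variable {M : Type*} {L : ↥G₁ → M → M} {g : ↥G₂ → M}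

theorem apply_eq_apply_of_mul_mul_eq (hLmul : ∀ a b v, L (a * b) v = L a (L b v))
    (hgcov : ∀ (η t : ↥G₂) (hη : x_c * (η : G) * x_c⁻¹ ∈ G₁),
      g (η * t) = L ⟨x_c * (η : G) * x_c⁻¹, hη⟩ (g t))
    {ξ₁ ξ₂ : ↥G₁} {t₁ t₂ : ↥G₂} (h : (ξ₁ : G) * x_c * t₁ = ξ₂ * x_c * t₂) :
    L ξ₁ (g t₁) = L ξ₂ (g t₂) := by
  have hconj := conj_mul_inv_eq_of_mul_mul_eq h
  have hη : x_c * ((t₁ * t₂⁻¹ : ↥G₂) : G) * x_c⁻¹ ∈ G₁ := by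
    rw [Subgroup.coe_mul, Subgroup.coe_inv, hconj]
    exact G₁.mul_mem (G₁.inv_mem ξ₁.2) ξ₂.2
  have hcov := hgcov (t₁ * t₂⁻¹) t₂ hη
  rw [inv_mul_cancel_right,
    show (⟨_, hη⟩ : ↥G₁) = ξ₁⁻¹ * ξ₂ from Subtype.ext (by simpa using hconj)] at hcov
  rw [hcov, ← hLmul, mul_inv_cancel_left]

variable (x_c) in
open Classical in
noncomputable def extend [Zero M] (L : ↥G₁ → M → M) (g : ↥G₂ → M) (x : G) : M :=
  if h : ∃ q : ↥G₁ × ↥G₂, (q.1 : G) * x_c * q.2 = x then L h.choose.1 (g h.choose.2) else 0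

theorem extend_mul_mul [Zero M] (hLmul : ∀ a b v, L (a * b) v = L a (L b v))
    (hgcov : ∀ (η t : ↥G₂) (hη : x_c * (η : G) * x_c⁻¹ ∈ G₁),
      g (η * t) = L ⟨x_c * (η : G) * x_c⁻¹, hη⟩ (g t))
    (ξ : ↥G₁) (t : ↥G₂) : extend x_c L g (ξ * x_c * t) = L ξ (g t) := by
  have hex : ∃ q : ↥G₁ × ↥G₂, (q.1 : G) * x_c * q.2 = ξ * x_c * t := ⟨(ξ, t), rfl⟩
  rw [extend, dif_pos hex]
  exact apply_eq_apply_of_mul_mul_eq hLmul hgcov hex.choose_spec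

theorem map_mul_of_map_mul_mul {f : G → M} (hLmul : ∀ a b v, L (a * b) v = L a (L b v))
    (hf : ∀ (ξ : ↥G₁) (t : ↥G₂), f (ξ * x_c * t) = L ξ (g t)) (ξ : ↥G₁) {x : G}
    (hx : x ∈ doubleCoset G₁ G₂ x_c) : f (ξ * x) = L ξ (f x) := by
  obtain ⟨ξ', hξ', t, ht, rfl⟩ := hx
  have hf' := hf ⟨ξ', hξ'⟩ ⟨t, ht⟩
  have hfξ := hf (ξ * ⟨ξ', hξ'⟩) ⟨t, ht⟩
  simp only [Subgroup.coe_mul, mul_assoc] at hf' hfξ ⊢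
  rw [hfξ, hLmul, hf']

theorem map_mul_eq_of_map_mul_mul (hL1 : ∀ v, L 1 v = v) {f : G → M}
    (hf : ∀ (ξ : ↥G₁) (t : ↥G₂), f (ξ * x_c * t) = L ξ (g t)) (t : ↥G₂) :
    f (x_c * t) = g t := by
  simpa [hL1] using hf 1 t

theorem map_mul_mul_eq_conj_of_map_mul {f : G → M}
    (hf : ∀ (ξ : ↥G₁) (x : G), x ∈ doubleCoset G₁ G₂ x_c → f (ξ * x) = L ξ (f x))
    (η t : ↥G₂) (hη : x_c * (η : G) * x_c⁻¹ ∈ G₁) :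
    f (x_c * ((η * t : ↥G₂) : G)) = L ⟨x_c * (η : G) * x_c⁻¹, hη⟩ (f (x_c * t)) := by
  rw [← hf _ _ (mul_mem t.2)]
  simp only [Subgroup.coe_mul, mul_assoc, inv_mul_cancel_left]

theorem eqOn_of_map_mul {f f' : G → M}
    (hf : ∀ (ξ : ↥G₁) (x : G), x ∈ doubleCoset G₁ G₂ x_c → f (ξ * x) = L ξ (f x))
    (hf' : ∀ (ξ : ↥G₁) (x : G), x ∈ doubleCoset G₁ G₂ x_c → f' (ξ * x) = L ξ (f' x))
    (h : ∀ t : ↥G₂, f (x_c * t) = f' (x_c * t)) : EqOn f f' (doubleCoset G₁ G₂ x_c) := by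
  rintro _ ⟨ξ, hξ, t, ht, rfl⟩
  rw [mul_assoc, hf ⟨ξ, hξ⟩ _ (mul_mem ht), hf' ⟨ξ, hξ⟩ _ (mul_mem ht), h ⟨t, ht⟩]

end Extension

section Parametrization

variable (G₁ G₂ x_c) in
def param (q : ↥G₁ × ↥G₂) : doubleCoset G₁ G₂ x_c :=
  ⟨q.1 * x_c * q.2, mul_mul_mem q.1.2 q.2.2⟩

theorem param_surjective : Function.Surjective (param G₁ G₂ x_c) := by
  rintro ⟨_, ξ, hξ, t, ht, rfl⟩
  exact ⟨(⟨ξ, hξ⟩, ⟨t, ht⟩), rfl⟩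

theorem continuous_param [TopologicalSpace G] [ContinuousMul G] :
    Continuous (param G₁ G₂ x_c) := by
  unfold param
  fun_prop

variable [TopologicalSpace G] [MeasurableSpace G] [BorelSpace G] {β : Type*} [MeasurableSpace β]

theorem measurable_restrict_of_measurable_comp_mul_mul [ContinuousMul G] [PolishSpace G]
    (hG₁ : IsClosed (G₁ : Set G)) (hG₂ : IsClosed (G₂ : Set G)) {u : G → β}
    (hu : Measurable fun q : ↥G₁ × ↥G₂ => u (q.1 * x_c * q.2)) :
    Measurable fun d : doubleCoset G₁ G₂ x_c => u d := by
  have := hG₁.polishSpace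
  have := hG₂.polishSpace
  exact (continuous_param.measurable.measurable_comp_iff_of_surjective param_surjective).mp hu

theorem measurable_comp_mul_of_measurable_restrict [ContinuousMul G] {u : G → β}
    (hu : Measurable fun d : doubleCoset G₁ G₂ x_c => u d) :
    Measurable fun t : ↥G₂ => u (x_c * t) := by
  have hmk : Continuous fun t : ↥G₂ => (⟨x_c * t, mul_mem t.2⟩ : doubleCoset G₁ G₂ x_c) := by
    fun_prop
  exact hu.comp hmk.measurable

end Parametrization

end doubleCoset

open doubleCoset in
theorem stmt14_general
    {G : Type*} [Group G] [TopologicalSpace G] [IsTopologicalGroup G]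
    [LocallyCompactSpace G] [SecondCountableTopology G] [T2Space G]
    [MeasurableSpace G] [BorelSpace G]
    (G₁ G₂ : Subgroup G) (hG₁ : IsClosed (G₁ : Set G)) (hG₂ : IsClosed (G₂ : Set G))
    (x_c : G)
    {H : Type*} [NormedAddCommGroup H] [InnerProductSpace ℂ H] [CompleteSpace H]
    (L : ↥G₁ → H →L[ℂ] H)
    (hL1 : L 1 = ContinuousLinearMap.id ℂ H)
    (hLmul : ∀ a b : ↥G₁, L (a * b) = (L a).comp (L b))
    (hLcont : ∀ v : H, Continuous fun h : ↥G₁ => L h v)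
    (g : ↥G₂ → H)
    (hgB : ∀ v : H, Measurable fun t : ↥G₂ => (inner ℂ v (g t) : ℂ))
    (hgcov : ∀ (η t : ↥G₂) (hη : x_c * (η : G) * x_c⁻¹ ∈ G₁),
      g (η * t) = L ⟨x_c * (η : G) * x_c⁻¹, hη⟩ (g t)) :
    (∀ (ξ₁ ξ₂ : ↥G₁) (t₁ t₂ : ↥G₂),
        (ξ₁ : G) * x_c * (t₁ : G) = (ξ₂ : G) * x_c * (t₂ : G) →
        L ξ₁ (g t₁) = L ξ₂ (g t₂)) ∧
    (∃ f : G → H,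
      (∀ (ξ : ↥G₁) (t : ↥G₂), f ((ξ : G) * x_c * (t : G)) = L ξ (g t)) ∧
      (∀ v : H, Measurable fun d : ↥(doubleCoset G₁ G₂ x_c) => (inner ℂ v (f (d : G)) : ℂ)) ∧
      (∀ (ξ : ↥G₁) (x : G), x ∈ doubleCoset G₁ G₂ x_c → f ((ξ : G) * x) = L ξ (f x)) ∧
      (∀ t : ↥G₂, f (x_c * (t : G)) = g t)) ∧
    (∀ f : G → H,
      (∀ v : H, Measurable fun d : ↥(doubleCoset G₁ G₂ x_c) => (inner ℂ v (f (d : G)) : ℂ)) →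
      (∀ (ξ : ↥G₁) (x : G), x ∈ doubleCoset G₁ G₂ x_c → f ((ξ : G) * x) = L ξ (f x)) →
      ((∀ v : H, Measurable fun t : ↥G₂ => (inner ℂ v (f (x_c * (t : G))) : ℂ)) ∧
        (∀ (η t : ↥G₂) (hη : x_c * (η : G) * x_c⁻¹ ∈ G₁),
          f (x_c * ((η * t : ↥G₂) : G))
            = L ⟨x_c * (η : G) * x_c⁻¹, hη⟩ (f (x_c * (t : G)))))) ∧
    (∀ f f' : G → H,
      (∀ (ξ : ↥G₁) (x : G), x ∈ doubleCoset G₁ G₂ x_c → f ((ξ : G) * x) = L ξ (f x)) →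
      (∀ (ξ : ↥G₁) (x : G), x ∈ doubleCoset G₁ G₂ x_c → f' ((ξ : G) * x) = L ξ (f' x)) →
      (∀ t : ↥G₂, f (x_c * (t : G)) = f' (x_c * (t : G))) →
      ∀ x ∈ doubleCoset G₁ G₂ x_c, f x = f' x) := by
  have := IsTopologicalGroup.polishSpace_of_locallyCompactSpace G
  have := hG₁.polishSpace
  have hLmul' : ∀ a b v, L (a * b) v = L a (L b v) := fun a b v => by rw [hLmul]; rfl
  have hL1' : ∀ v, L 1 v = v := fun v => by rw [hL1]; rfl
  set f := extend x_c (fun ξ => ⇑(L ξ)) g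
  have hf : ∀ (ξ : ↥G₁) (t : ↥G₂), f (ξ * x_c * t) = L ξ (g t) := extend_mul_mul hLmul' hgcov
  have hfB (v : H) : Measurable fun d : doubleCoset G₁ G₂ x_c => (inner ℂ v (f d) : ℂ) :=
    measurable_restrict_of_measurable_comp_mul_mul (u := fun x => inner ℂ v (f x)) hG₁ hG₂
      (by simpa only [hf] using measurable_inner_apply_uncurry hLcont hgB v)
  refine ⟨fun _ _ _ _ => apply_eq_apply_of_mul_mul_eq (L := fun ξ => L ξ) hLmul' hgcov,
    ⟨f, hf, hfB, fun ξ _ => map_mul_of_map_mul_mul hLmul' hf ξ, map_mul_eq_of_map_mul_mul hL1' hf⟩,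
    fun f' hf'B hf'L => ⟨fun v => ?_, map_mul_mul_eq_conj_of_map_mul hf'L⟩,
    fun _ _ hf₁ hf₂ h _ hx => eqOn_of_map_mul hf₁ hf₂ h hx⟩
  exact measurable_comp_mul_of_measurable_restrict (u := fun x => inner ℂ v (f' x)) (hf'B v)

theorem stmt14
    {G : Type*} [Group G] [TopologicalSpace G] [IsTopologicalGroup G]
    [LocallyCompactSpace G] [SecondCountableTopology G] [T2Space G]
    [MeasurableSpace G] [BorelSpace G]
    (G₁ G₂ : Subgroup G) (hG₁ : IsClosed (G₁ : Set G)) (hG₂ : IsClosed (G₂ : Set G))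
    (x_c : G)
    {H : Type*} [NormedAddCommGroup H] [InnerProductSpace ℂ H] [CompleteSpace H]
    [SecondCountableTopology H]
    (L : ↥G₁ → H →L[ℂ] H)
    (hL1 : L 1 = ContinuousLinearMap.id ℂ H)
    (hLmul : ∀ a b : ↥G₁, L (a * b) = (L a).comp (L b))
    (hLcont : ∀ v : H, Continuous fun h : ↥G₁ => L h v)
    (g : ↥G₂ → H)
    (hgB : ∀ v : H, Measurable fun t : ↥G₂ => (inner ℂ v (g t) : ℂ))
    (hgcov : ∀ (η t : ↥G₂) (hη : x_c * (η : G) * x_c⁻¹ ∈ G₁),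
      g (η * t) = L ⟨x_c * (η : G) * x_c⁻¹, hη⟩ (g t)) :
    (∀ (ξ₁ ξ₂ : ↥G₁) (t₁ t₂ : ↥G₂),
        (ξ₁ : G) * x_c * (t₁ : G) = (ξ₂ : G) * x_c * (t₂ : G) →
        L ξ₁ (g t₁) = L ξ₂ (g t₂)) ∧
    (∃ f : G → H,
      (∀ (ξ : ↥G₁) (t : ↥G₂), f ((ξ : G) * x_c * (t : G)) = L ξ (g t)) ∧
      (∀ v : H, Measurable fun d : ↥(doubleCoset G₁ G₂ x_c) => (inner ℂ v (f (d : G)) : ℂ)) ∧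
      (∀ (ξ : ↥G₁) (x : G), x ∈ doubleCoset G₁ G₂ x_c → f ((ξ : G) * x) = L ξ (f x)) ∧
      (∀ t : ↥G₂, f (x_c * (t : G)) = g t)) ∧
    (∀ f : G → H,
      (∀ v : H, Measurable fun d : ↥(doubleCoset G₁ G₂ x_c) => (inner ℂ v (f (d : G)) : ℂ)) →
      (∀ (ξ : ↥G₁) (x : G), x ∈ doubleCoset G₁ G₂ x_c → f ((ξ : G) * x) = L ξ (f x)) →
      ((∀ v : H, Measurable fun t : ↥G₂ => (inner ℂ v (f (x_c * (t : G))) : ℂ)) ∧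
        (∀ (η t : ↥G₂) (hη : x_c * (η : G) * x_c⁻¹ ∈ G₁),
          f (x_c * ((η * t : ↥G₂) : G))
            = L ⟨x_c * (η : G) * x_c⁻¹, hη⟩ (f (x_c * (t : G)))))) ∧
    (∀ f f' : G → H,
      (∀ (ξ : ↥G₁) (x : G), x ∈ doubleCoset G₁ G₂ x_c → f ((ξ : G) * x) = L ξ (f x)) →
      (∀ (ξ : ↥G₁) (x : G), x ∈ doubleCoset G₁ G₂ x_c → f' ((ξ : G) * x) = L ξ (f' x)) →
      (∀ t : ↥G₂, f (x_c * (t : G)) = f' (x_c * (t : G))) →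
      ∀ x ∈ doubleCoset G₁ G₂ x_c, f x = f' x) :=
  stmt14_general G₁ G₂ hG₁ hG₂ x_c L hL1 hLmul hLcont g hgB hgcov
end
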